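/- arXiv:2408.07061 — 9 statements merged into one kernel-verified Lean document; each statement's English description precedes it below -/
import Mathlib

section
/- Let $y_1, \ldots, y_m$ be a finite real sequence such that both $(y_k)$ and the first differences $(\Delta y_k)$, where $\Delta y_k = y_{k+1} - y_k$, are monotonic. Then for any interval $[a,b]$, the number of indices $k$ with $y_k \in [a,b]$ is at most $\left(\frac{2(b-a)}{\min_k |\Delta^2 y_k|}\right)^{1/2} + 2$, where $\Delta^2 y_k = y_{k+2} - 2y_{k+1} + y_k$ (assuming $\min_k |\Delta^2 y_k| > 0$). -/
private lemma lin_aux (n : ℕ) (e : ℕ → ℝ) (δ : ℝ) (h0 : 0 ≤ e 0)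
    (hstep : ∀ j, j + 1 < n → e j + δ ≤ e (j + 1)) :
    ∀ j, j < n → δ * j ≤ e j := by
  intro j hj
  induction j with
  | zero => simpa using h0
  | succ i ih =>
    have h1 := hstep i hj
    have h2 := ih (by omega)
    push_cast
    nlinarith [h2, h1]

private lemma core_aux (n : ℕ) (e : ℕ → ℝ) (δ c : ℝ)
    (h : ∀ j, j < n → δ * j ≤ e j)
    (hsum : ∑ j ∈ Finset.range n, e j ≤ c) :
    δ * ((n : ℝ) * ((n : ℝ) - 1)) / 2 ≤ c := by
  have hle : ∑ j ∈ Finset.range n, (δ * (j : ℝ)) ≤ ∑ j ∈ Finset.range n, e j :=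
    Finset.sum_le_sum (fun j hj => h j (Finset.mem_range.mp hj))
  have hid : ∑ j ∈ Finset.range n, (j : ℝ) = (n : ℝ) * ((n : ℝ) - 1) / 2 := by
    clear hle hsum h
    induction n with
    | zero => simp
    | succ k ih => rw [Finset.sum_range_succ, ih]; push_cast; ring
  calc δ * ((n : ℝ) * ((n : ℝ) - 1)) / 2
      = ∑ j ∈ Finset.range n, (δ * (j : ℝ)) := by
        rw [← Finset.mul_sum, hid]; ring
    _ ≤ ∑ j ∈ Finset.range n, e j := hle
    _ ≤ c := hsum

private theorem helperM (m : ℕ) (y : ℕ → ℝ) (a b δ : ℝ) (hab : a ≤ b)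
    (hy : MonotoneOn y (Set.Icc 1 m))
    (hΔ : MonotoneOn (fun k => y (k + 1) - y k) (Set.Icc 1 (m - 1)) ∨
          AntitoneOn (fun k => y (k + 1) - y k) (Set.Icc 1 (m - 1)))
    (hδ2 : ∀ k : ℕ, 1 ≤ k → k + 2 ≤ m → δ ≤ |y (k + 2) - 2 * y (k + 1) + y k|)
    (hδpos : 0 < δ) :
    (((Finset.Icc 1 m).filter fun k => y k ∈ Set.Icc a b).card : ℝ) ≤
      Real.sqrt (2 * (b - a) / δ) + 2 := by
  set S := (Finset.Icc 1 m).filter fun k => y k ∈ Set.Icc a b with hSdef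
  by_cases hS : S.card ≤ 2
  · have h1 : (S.card : ℝ) ≤ 2 := by exact_mod_cast hS
    have := Real.sqrt_nonneg (2 * (b - a) / δ)
    linarith
  push_neg at hS
  have hne : S.Nonempty := Finset.card_pos.mp (by omega)
  set p := S.min' hne with hp
  set q := S.max' hne with hq
  have hpS : p ∈ S := S.min'_mem hne
  have hqS : q ∈ S := S.max'_mem hne
  have hpS' := Finset.mem_filter.mp hpS
  have hqS' := Finset.mem_filter.mp hqS
  have hp1 : 1 ≤ p := (Finset.mem_Icc.mp hpS'.1).1
  have hpm : p ≤ m := (Finset.mem_Icc.mp hpS'.1).2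
  have hq1 : 1 ≤ q := (Finset.mem_Icc.mp hqS'.1).1
  have hqm : q ≤ m := (Finset.mem_Icc.mp hqS'.1).2
  have hya : a ≤ y p := (Set.mem_Icc.mp hpS'.2).1
  have hyb : y q ≤ b := (Set.mem_Icc.mp hqS'.2).2
  have hpq : p ≤ q := S.min'_le q hqS
  -- S = Icc p q
  have hEq : S = Finset.Icc p q := by
    apply Finset.Subset.antisymm
    · intro k hk
      exact Finset.mem_Icc.mpr ⟨S.min'_le k hk, S.le_max' k hk⟩
    · intro k hk
      obtain ⟨hk1, hk2⟩ := Finset.mem_Icc.mp hk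
      have hkm1 : 1 ≤ k := le_trans hp1 hk1
      have hkmm : k ≤ m := le_trans hk2 hqm
      refine Finset.mem_filter.mpr ⟨Finset.mem_Icc.mpr ⟨hkm1, hkmm⟩, ?_⟩
      have h1 : y p ≤ y k := hy (Set.mem_Icc.mpr ⟨hp1, hpm⟩) (Set.mem_Icc.mpr ⟨hkm1, hkmm⟩) hk1
      have h2 : y k ≤ y q := hy (Set.mem_Icc.mpr ⟨hkm1, hkmm⟩) (Set.mem_Icc.mpr ⟨hq1, hqm⟩) hk2
      exact Set.mem_Icc.mpr ⟨le_trans hya h1, le_trans h2 hyb⟩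
  have hcard : S.card = q + 1 - p := by rw [hEq, Nat.card_Icc]
  set n := q - p with hn
  have hqn : q = p + n := by omega
  have hn2 : 2 ≤ n := by omega
  -- telescoping sum
  have htel : ∑ j ∈ Finset.range n, (y (p + j + 1) - y (p + j)) = y q - y p := by
    rw [hqn]
    exact Finset.sum_range_sub (fun j => y (p + j)) n
  have hsumle : ∑ j ∈ Finset.range n, (y (p + j + 1) - y (p + j)) ≤ b - a := by
    rw [htel]; linarith
  -- nonnegativity of differences inside [p, q-1]
  have hdnn : ∀ k, p ≤ k → k + 1 ≤ q → 0 ≤ y (k + 1) - y k := by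
    intro k hk1 hk2
    have h := hy (Set.mem_Icc.mpr ⟨by omega, by omega⟩)
      (Set.mem_Icc.mpr ⟨by omega, by omega⟩) (Nat.le_succ k)
    linarith
  -- the step inequality, depending on direction of hΔ
  have key : δ * ((n : ℝ) * ((n : ℝ) - 1)) / 2 ≤ b - a := by
    rcases hΔ with hmono | hanti
    · -- differences increasing: e j = d (p + j)
      apply core_aux n (fun j => y (p + j + 1) - y (p + j)) δ (b - a) _ hsumle
      apply lin_aux
      · exact hdnn p le_rfl (by omega)
      · intro j hj
        set k := p + j with hk
        have h2m : k + 2 ≤ m := by omega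
        have hmono' : y (k + 1) - y k ≤ y (k + 2) - y (k + 1) := by
          have := hmono (Set.mem_Icc.mpr (by omega : 1 ≤ k ∧ k ≤ m - 1))
            (Set.mem_Icc.mpr (by omega : 1 ≤ k + 1 ∧ k + 1 ≤ m - 1)) (Nat.le_succ k)
          simpa using this
        have habs := hδ2 k (by omega) h2m
        have heq : |y (k + 2) - 2 * y (k + 1) + y k|
            = (y (k + 2) - y (k + 1)) - (y (k + 1) - y k) := by
          rw [abs_of_nonneg (by linarith)]; ring
        rw [heq] at habs
        show (y (p + j + 1) - y (p + j)) + δ ≤ y (p + (j + 1) + 1) - y (p + (j + 1))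
        have e1 : p + (j + 1) + 1 = k + 2 := by omega
        have e2 : p + (j + 1) = k + 1 := by omega
        rw [e1, e2]
        linarith
    · -- differences decreasing: e j = d (p + (n - 1 - j))
      apply core_aux n (fun j => y (p + (n - 1 - j) + 1) - y (p + (n - 1 - j))) δ (b - a)
      · apply lin_aux
        · exact hdnn (p + (n - 1 - 0)) (by omega) (by omega)
        · intro j hj
          set k := p + (n - 1 - (j + 1)) with hk
          have h2m : k + 2 ≤ m := by omega
          have hanti' : y (k + 2) - y (k + 1) ≤ y (k + 1) - y k := by
            have := hanti (Set.mem_Icc.mpr (by omega : 1 ≤ k ∧ k ≤ m - 1))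
              (Set.mem_Icc.mpr (by omega : 1 ≤ k + 1 ∧ k + 1 ≤ m - 1)) (Nat.le_succ k)
            simpa using this
          have habs := hδ2 k (by omega) h2m
          have heq : |y (k + 2) - 2 * y (k + 1) + y k|
              = (y (k + 1) - y k) - (y (k + 2) - y (k + 1)) := by
            rw [abs_of_nonpos (by linarith)]; ring
          rw [heq] at habs
          show (y (p + (n - 1 - j) + 1) - y (p + (n - 1 - j))) + δ
              ≤ y (p + (n - 1 - (j + 1)) + 1) - y (p + (n - 1 - (j + 1)))
          have e1 : p + (n - 1 - j) = k + 1 := by omega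
          rw [e1]
          linarith
      · rw [show (fun j => y (p + (n - 1 - j) + 1) - y (p + (n - 1 - j)))
            = (fun j => (fun i => y (p + i + 1) - y (p + i)) (n - 1 - j)) from rfl]
        rw [Finset.sum_range_reflect (fun i => y (p + i + 1) - y (p + i)) n]
        exact hsumle
  -- final arithmetic
  have hncard : (S.card : ℝ) = (n : ℝ) + 1 := by
    have : S.card = n + 1 := by omega
    rw [this]; push_cast; ring
  have hnn2 : (2 : ℝ) ≤ (n : ℝ) := by exact_mod_cast hn2
  have hsq : ((n : ℝ) - 1) ^ 2 ≤ 2 * (b - a) / δ := by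
    rw [le_div_iff₀ hδpos]
    nlinarith [key]
  have hle : (n : ℝ) - 1 ≤ Real.sqrt (2 * (b - a) / δ) := by
    have h := Real.sqrt_le_sqrt hsq
    rwa [Real.sqrt_sq (by linarith)] at h
  rw [hncard]; linarith

/-- Lemma 1 (L3): counting points of a sequence with monotone values and
monotone first differences in an interval `[a,b]`. -/
theorem count_in_interval_le (m : ℕ) (y : ℕ → ℝ) (a b δ : ℝ) (hab : a ≤ b)
    (hy : MonotoneOn y (Set.Icc 1 m) ∨ AntitoneOn y (Set.Icc 1 m))
    (hΔ : MonotoneOn (fun k => y (k + 1) - y k) (Set.Icc 1 (m - 1)) ∨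
          AntitoneOn (fun k => y (k + 1) - y k) (Set.Icc 1 (m - 1)))
    (hδ : IsLeast {r : ℝ | ∃ k : ℕ, 1 ≤ k ∧ k + 2 ≤ m ∧
            r = |y (k + 2) - 2 * y (k + 1) + y k|} δ)
    (hδpos : 0 < δ) :
    (((Finset.Icc 1 m).filter fun k => y k ∈ Set.Icc a b).card : ℝ) ≤
      Real.sqrt (2 * (b - a) / δ) + 2 := by
  have hδ2 : ∀ k : ℕ, 1 ≤ k → k + 2 ≤ m → δ ≤ |y (k + 2) - 2 * y (k + 1) + y k| :=
    fun k h1 h2 => hδ.2 ⟨k, h1, h2, rfl⟩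
  rcases hy with hmono | hanti
  · exact helperM m y a b δ hab hmono hΔ hδ2 hδpos
  · have hy' : MonotoneOn (fun k => -(y k)) (Set.Icc 1 m) :=
      fun x hx z hz hxz => neg_le_neg (hanti hx hz hxz)
    have hΔ' : MonotoneOn (fun k => (-(y (k + 1))) - (-(y k))) (Set.Icc 1 (m - 1)) ∨
        AntitoneOn (fun k => (-(y (k + 1))) - (-(y k))) (Set.Icc 1 (m - 1)) := by
      rcases hΔ with h | h
      · right; intro x hx z hz hxz
        have := h hx hz hxz
        simp only at this ⊢; linarith
      · left; intro x hx z hz hxz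
        have := h hx hz hxz
        simp only at this ⊢; linarith
    have hδ2' : ∀ k : ℕ, 1 ≤ k → k + 2 ≤ m →
        δ ≤ |(-(y (k + 2))) - 2 * (-(y (k + 1))) + (-(y k))| := by
      intro k h1 h2
      have heq : (-(y (k + 2))) - 2 * (-(y (k + 1))) + (-(y k))
          = -(y (k + 2) - 2 * y (k + 1) + y k) := by ring
      rw [heq, abs_neg]
      exact hδ2 k h1 h2
    have hset : ((Finset.Icc 1 m).filter fun k => y k ∈ Set.Icc a b)
        = ((Finset.Icc 1 m).filter fun k => (-(y k)) ∈ Set.Icc (-b) (-a)) := by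
      apply Finset.filter_congr
      intro k _
      simp only [Set.mem_Icc, neg_le_neg_iff, eq_iff_iff]
      constructor
      · rintro ⟨h1, h2⟩; exact ⟨by linarith, by linarith⟩
      · rintro ⟨h1, h2⟩; exact ⟨by linarith, by linarith⟩
    have hmain := helperM m (fun k => -(y k)) (-b) (-a) δ (by linarith) hy' hΔ' hδ2' hδpos
    rw [hset]
    have : 2 * ((-a) - (-b)) = 2 * (b - a) := by ring
    rw [this] at hmain
    exact hmain
end

section
/- Let $y_1, \ldots, y_m$ be a finite real sequence such that both $(y_k)$ and $(\Delta y_k)$ are monotonic, and such that $\max\{\max_k |\Delta^2 y_k|, \min_k |\Delta y_k|\} > 0$. Then $m \ge \left(\frac{2|y_m - y_1|}{\max\{\max_k |\Delta^2 y_k|, \min_k |\Delta y_k|\}}\right)^{1/2}$. -/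
/-!
The second differences and one first difference are bounded by `M = max A B`, so the first
differences are `M`-Lipschitz in the index and satisfy `|Δy_k| ≤ (|k - j| + 1) M` for the index `j`
with `|Δy_j| = B`. Summing over `k` gives `|y_m - y_1| ≤ M (m - 1) m / 2 ≤ M m² / 2`.
-/

open Finset

lemma sum_Ico_abs_sub_add_one_le {n a j : ℕ} (haj : a ≤ j) (hja : j ≤ a + n) :
    ∑ k ∈ Ico a (a + n + 1), (|(k : ℝ) - j| + 1) ≤ (n + 1) * (n + 2) / 2 := by
  induction n generalizing a j with
  | zero =>
    obtain rfl : j = a := by omega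
    simp
  | succ n ih =>
    -- drop the endpoint of the interval farther from `j`: its term is at most `n + 2`
    have haj' : (a : ℝ) ≤ j := by exact_mod_cast haj
    rcases Nat.lt_or_eq_of_le hja with hj | rfl
    · have hja' : (j : ℝ) < a + n + 1 := by exact_mod_cast hj
      rw [show a + (n + 1) + 1 = a + n + 1 + 1 by ring, sum_Ico_succ_top (by omega)]
      have hlast : |(a + n + 1 : ℝ) - j| ≤ n + 1 := by
        rw [abs_of_pos (by linarith)]; linarith
      have := ih haj (by omega : j ≤ a + n)
      push_cast at this ⊢
      linarith
    · rw [sum_eq_sum_Ico_succ_bot (by omega), show a + (n + 1) + 1 = a + 1 + n + 1 by ring]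
      have := ih (by omega : a + 1 ≤ a + (n + 1)) (by omega : a + (n + 1) ≤ a + 1 + n)
      push_cast at this ⊢
      rw [show (a : ℝ) - (a + (n + 1)) = -(n + 1) by ring, abs_neg, abs_of_nonneg (by positivity)]
      linarith

lemma abs_sub_le_mul_of_abs_succ_sub_le {d : ℕ → ℝ} {M : ℝ} {a b : ℕ}
    (h : ∀ k, a ≤ k → k < b → |d (k + 1) - d k| ≤ M) {i j : ℕ} (hai : a ≤ i) (hib : i ≤ b)
    (haj : a ≤ j) (hjb : j ≤ b) : |d i - d j| ≤ |(i : ℝ) - j| * M := by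
  wlog hij : i ≤ j generalizing i j
  · rw [abs_sub_comm, abs_sub_comm (i : ℝ)]
    exact this haj hjb hai hib (by omega)
  have hsum := dist_le_Ico_sum_of_dist_le (f := d) (d := fun _ => M) hij
    fun hik hkj => by rw [dist_comm, Real.dist_eq]; exact h _ (by omega) (by omega)
  rw [sum_const, Nat.card_Ico, nsmul_eq_mul, Nat.cast_sub hij] at hsum
  rwa [← Real.dist_eq, abs_sub_comm, abs_of_nonneg (by simpa using hij)]

theorem two_mul_abs_sub_le_of_abs_second_diff_le {y : ℕ → ℝ} {M : ℝ} {a b j : ℕ} (haj : a ≤ j)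
    (hjb : j < b) (hj : |y (j + 1) - y j| ≤ M)
    (h2 : ∀ k, a ≤ k → k + 2 ≤ b → |y (k + 2) - 2 * y (k + 1) + y k| ≤ M) :
    2 * |y b - y a| ≤ ((b : ℝ) - a) * ((b : ℝ) - a + 1) * M := by
  set d : ℕ → ℝ := fun k => y (k + 1) - y k
  have hd : ∀ k, a ≤ k → k < b - 1 → |d (k + 1) - d k| ≤ M := fun k hak hkb => by
    have hsecond : d (k + 1) - d k = y (k + 2) - 2 * y (k + 1) + y k := by simp only [d]; ring
    exact hsecond ▸ h2 k hak (by omega)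
  have hdk : ∀ k ∈ Ico a b, |d k| ≤ (|(k : ℝ) - j| + 1) * M := fun k hk => by
    have hk := mem_Ico.1 hk
    have := abs_sub_le_mul_of_abs_succ_sub_le (i := k) hd hk.1 (by omega) haj (by omega)
    linarith [abs_sub_abs_le_abs_sub (d k) (d j)]
  obtain ⟨n, rfl⟩ : ∃ n, b = a + n + 1 := ⟨b - a - 1, by omega⟩
  calc 2 * |y (a + n + 1) - y a|
      ≤ 2 * ∑ k ∈ Ico a (a + n + 1), (|(k : ℝ) - j| + 1) * M := by
        gcongr
        rw [abs_sub_comm, ← Real.dist_eq]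
        refine dist_le_Ico_sum_of_dist_le (by omega) fun hak hkb => ?_
        rw [dist_comm, Real.dist_eq]
        exact hdk _ (mem_Ico.2 ⟨hak, hkb⟩)
    _ ≤ 2 * ((n + 1) * (n + 2) / 2 * M) := by
        rw [← sum_mul]
        gcongr
        · exact (abs_nonneg _).trans hj
        · exact sum_Ico_abs_sub_add_one_le haj (by omega)
    _ = _ := by push_cast; ring

theorem length_lower_bound_general (m : ℕ) (y : ℕ → ℝ) (A B : ℝ)
    (hA : IsGreatest {r : ℝ | ∃ k : ℕ, 1 ≤ k ∧ k + 2 ≤ m ∧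
            r = |y (k + 2) - 2 * y (k + 1) + y k|} A)
    (hB : IsLeast {r : ℝ | ∃ k : ℕ, 1 ≤ k ∧ k + 1 ≤ m ∧
            r = |y (k + 1) - y k|} B)
    (hpos : 0 < max A B) :
    Real.sqrt (2 * |y m - y 1| / max A B) ≤ (m : ℝ) := by
  obtain ⟨j, hj1, hjm, hBj⟩ := hB.1
  have hbound := two_mul_abs_sub_le_of_abs_second_diff_le (y := y) (M := max A B) hj1 hjm
    (hBj ▸ le_max_right A B) fun k hk1 hkm => (hA.2 ⟨k, hk1, hkm, rfl⟩).trans (le_max_left _ _)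
  have hm : (1 : ℝ) ≤ m := by exact_mod_cast (by omega : 1 ≤ m)
  rw [Real.sqrt_le_left (by positivity), div_le_iff₀ hpos]
  calc 2 * |y m - y 1| ≤ ((m : ℝ) - 1) * ((m : ℝ) - 1 + 1) * max A B := by simpa using hbound
    _ ≤ (m : ℝ) ^ 2 * max A B := by gcongr; nlinarith

/-- Lemma 2 (L6): lower bound on the length of a sequence with monotone values
and monotone first differences. -/
theorem length_lower_bound (m : ℕ) (y : ℕ → ℝ) (A B : ℝ) (hm : 3 ≤ m)
    (hy : MonotoneOn y (Set.Icc 1 m) ∨ AntitoneOn y (Set.Icc 1 m))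
    (hΔ : MonotoneOn (fun k => y (k + 1) - y k) (Set.Icc 1 (m - 1)) ∨
          AntitoneOn (fun k => y (k + 1) - y k) (Set.Icc 1 (m - 1)))
    (hA : IsGreatest {r : ℝ | ∃ k : ℕ, 1 ≤ k ∧ k + 2 ≤ m ∧
            r = |y (k + 2) - 2 * y (k + 1) + y k|} A)
    (hB : IsLeast {r : ℝ | ∃ k : ℕ, 1 ≤ k ∧ k + 1 ≤ m ∧
            r = |y (k + 1) - y k|} B)
    (hpos : 0 < max A B) :
    Real.sqrt (2 * |y m - y 1| / max A B) ≤ (m : ℝ) :=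
  length_lower_bound_general m y A B hA hB hpos
end

section
/- Let $y_1, \ldots, y_m$ be a finite real sequence such that both $(y_k)$ and $(\Delta y_k)$ are increasing. Let $J = [a,b)$ and $I = [c,d)$ be intervals with $b \le c$ and $J \subset [y_1, y_m)$. Then $\frac{\#\{k : y_k \in I\} - 1}{d - c} \le \frac{\#\{k : y_k \in J\} + 1}{b - a}$. -/
/-!
Let `p < q` be the first and last indices with `y k ∈ I`, so `#I - 1 ≤ q - p`, and let
`h = (y q - y p) / (q - p)` be the mean step on `[p, q]`. As the steps increase, every step
before `p` is at most `h`. Since `y 1 ≤ a` and `y p ≥ c ≥ b`, the sequence crosses `J` before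
`p`: between the last index `s` with `y s ≤ a` and the first later index `t` with `y t ≥ b`
all values lie in `J`, and the rise `b - a ≤ y t - y s ≤ (t - s) h` is made of at most
`#J + 1` steps. Hence
`(#I - 1) (b - a) ≤ (q - p) (#J + 1) h = (#J + 1) (y q - y p) ≤ (#J + 1) (d - c)`.
-/

open Finset

theorem Finset.exists_lt_card_le_sub_add_one {S : Finset ℕ} (hS : 1 < #S) :
    ∃ p ∈ S, ∃ q ∈ S, p < q ∧ #S ≤ q - p + 1 := by
  have hne : S.Nonempty := card_pos.1 (by omega)
  have hsub : S ⊆ Icc (S.min' hne) (S.max' hne) := fun k hk =>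
    mem_Icc.2 ⟨S.min'_le k hk, S.le_max' k hk⟩
  have := card_le_card hsub
  rw [Nat.card_Icc] at this
  exact ⟨_, S.min'_mem hne, _, S.max'_mem hne, S.min'_lt_max'_of_card hS, by omega⟩

theorem exists_crossing_Ico {α : Type*} [LinearOrder α] {y : ℕ → α} {a b : α} {n : ℕ}
    (hab : a < b) (hn : 1 ≤ n) (ha : y 1 ≤ a) (hb : b ≤ y n) :
    ∃ s t, 1 ≤ s ∧ s < t ∧ t ≤ n ∧ y s ≤ a ∧ b ≤ y t ∧
      ∀ k, s < k → k < t → y k ∈ Set.Ico a b := by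
  classical
  have hex : ∃ t, 1 ≤ t ∧ b ≤ y t := ⟨n, hn, hb⟩
  obtain ⟨ht1, hbt⟩ := Nat.find_spec hex
  set t := Nat.find hex
  have hbefore : ∀ k, 1 ≤ k → k < t → y k < b := fun k hk hkt =>
    not_le.1 fun hbk => Nat.find_min hex hkt ⟨hk, hbk⟩
  set s := Nat.findGreatest (fun k => y k ≤ a) t
  have hsa : y s ≤ a := Nat.findGreatest_spec (P := fun k => y k ≤ a) ht1 ha
  have hs1 : 1 ≤ s := Nat.le_findGreatest (P := fun k => y k ≤ a) ht1 ha
  have hst : s < t := by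
    refine (Nat.findGreatest_le t).lt_of_ne fun hst => ?_
    rw [show s = t from hst] at hsa
    exact (hab.trans_le hbt).not_ge hsa
  refine ⟨s, t, hs1, hst, Nat.find_min' hex ⟨hn, hb⟩, hsa, hbt,
    fun k hsk hkt => ⟨?_, ?_⟩⟩
  · exact (not_le.1 (Nat.findGreatest_is_greatest (P := fun k => y k ≤ a) hsk hkt.le)).le
  · exact hbefore k (by omega) hkt

section OrderedRing

variable {R : Type*} [CommRing R] [LinearOrder R] [IsStrictOrderedRing R]

theorem sub_le_card_add_one_mul_of_steps_le {y : ℕ → R} {a b h : R} {n : ℕ}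
    (hab : a < b) (hn : 1 ≤ n) (ha : y 1 ≤ a) (hb : b ≤ y n)
    (hstep : ∀ k, 1 ≤ k → k < n → y (k + 1) - y k ≤ h) :
    b - a ≤ ((#{k ∈ Icc 1 n | y k ∈ Set.Ico a b} : R) + 1) * h := by
  obtain ⟨s, t, hs1, hst, htn, hsa, hbt, hmid⟩ := exists_crossing_Ico hab hn ha hb
  have hrise : b - a ≤ ((t - s : ℕ) : R) * h := by
    have := sum_le_card_nsmul (Ico s t) (fun j => y (j + 1) - y j) h fun j hj => by
      rw [mem_Ico] at hj
      exact hstep j (by omega) (by omega)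
    rw [sum_Ico_sub _ hst.le, Nat.card_Ico, nsmul_eq_mul] at this
    linarith
  have hcount : t - s ≤ #{k ∈ Icc 1 n | y k ∈ Set.Ico a b} + 1 := by
    have hsub : Ioo s t ⊆ {k ∈ Icc 1 n | y k ∈ Set.Ico a b} := fun k hk => by
      rw [mem_Ioo] at hk
      exact mem_filter.2 ⟨mem_Icc.2 ⟨by omega, by omega⟩, hmid k hk.1 hk.2⟩
    have := card_le_card hsub
    rw [Nat.card_Ioo] at this
    omega
  have hh : 0 ≤ h :=
    (pos_of_mul_pos_right ((sub_pos.2 hab).trans_le hrise) (Nat.cast_nonneg _)).le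
  calc b - a ≤ ((t - s : ℕ) : R) * h := hrise
    _ ≤ _ := mul_le_mul_of_nonneg_right (by exact_mod_cast hcount) hh

theorem mul_step_le_sub_of_monotoneOn_steps {y : ℕ → R} {m : ℕ}
    (hΔ : MonotoneOn (fun k => y (k + 1) - y k) (Set.Icc 1 (m - 1)))
    {k p q : ℕ} (hk : 1 ≤ k) (hkp : k < p) (hpq : p ≤ q) (hqm : q ≤ m) :
    ((q : R) - p) * (y (k + 1) - y k) ≤ y q - y p := by
  have := card_nsmul_le_sum (Ico p q) (fun j => y (j + 1) - y j) (y (k + 1) - y k)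
    fun j hj => by
      rw [mem_Ico] at hj
      exact hΔ ⟨hk, by omega⟩ ⟨by omega, by omega⟩ (by omega)
  rwa [sum_Ico_sub _ hpq, Nat.card_Ico, nsmul_eq_mul, Nat.cast_sub hpq] at this

end OrderedRing

theorem count_compare_general (m : ℕ) (y : ℕ → ℝ) (a b c d : ℝ)
    (hΔ : MonotoneOn (fun k => y (k + 1) - y k) (Set.Icc 1 (m - 1)))
    (hab : a < b) (hbc : b ≤ c) (hcd : c < d)
    (hJ : y 1 ≤ a) :
    ((((Finset.Icc 1 m).filter fun k => y k ∈ Set.Ico c d).card : ℝ) - 1) / (d - c) ≤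
      ((((Finset.Icc 1 m).filter fun k => y k ∈ Set.Ico a b).card : ℝ) + 1) / (b - a) := by
  set SI := {k ∈ Icc 1 m | y k ∈ Set.Ico c d}
  set SJ := {k ∈ Icc 1 m | y k ∈ Set.Ico a b}
  rcases le_or_gt #SI 1 with hI | hI
  · have hI' : (#SI : ℝ) ≤ 1 := by exact_mod_cast hI
    calc ((#SI : ℝ) - 1) / (d - c) ≤ 0 :=
          div_nonpos_of_nonpos_of_nonneg (by linarith) (by linarith)
      _ ≤ _ := div_nonneg (by positivity) (by linarith)
  obtain ⟨p, hp, q, hq, hpq, hNI⟩ := exists_lt_card_le_sub_add_one hI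
  obtain ⟨hpI, hcp, -⟩ := mem_filter.1 hp
  obtain ⟨hqI, -, hqd⟩ := mem_filter.1 hq
  have hqm : q ≤ m := (mem_Icc.1 hqI).2
  have hqp : (0 : ℝ) < q - p := sub_pos.2 (by exact_mod_cast hpq)
  set SJp := {k ∈ Icc 1 p | y k ∈ Set.Ico a b}
  have hcross : b - a ≤ (#SJp + 1) * ((y q - y p) / (q - p)) :=
    sub_le_card_add_one_mul_of_steps_le hab (mem_Icc.1 hpI).1 hJ (hbc.trans hcp)
      fun k hk hkp =>
        (le_div_iff₀' hqp).2 (mul_step_le_sub_of_monotoneOn_steps hΔ hk hkp hpq.le hqm)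
  have hSJp : #SJp ≤ #SJ :=
    card_le_card (filter_subset_filter _ (Icc_subset_Icc le_rfl (hpq.le.trans hqm)))
  have hNI' : (#SI : ℝ) - 1 ≤ q - p := by
    rw [sub_le_iff_le_add, ← Nat.cast_sub hpq.le]
    exact_mod_cast hNI
  rw [div_le_div_iff₀ (sub_pos.2 hcd) (sub_pos.2 hab)]
  calc ((#SI : ℝ) - 1) * (b - a)
    _ ≤ (q - p) * ((#SJp + 1) * ((y q - y p) / (q - p))) := by gcongr
    _ = (#SJp + 1) * (y q - y p) := by field_simp
    _ ≤ (#SJp + 1) * (d - c) := by gcongr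
    _ ≤ (#SJ + 1) * (d - c) := by gcongr

/-- Lemma 3 (L7): comparison of counts in two half-open intervals for a sequence
with increasing values and increasing first differences. -/
theorem count_compare (m : ℕ) (y : ℕ → ℝ) (a b c d : ℝ)
    (hy : MonotoneOn y (Set.Icc 1 m))
    (hΔ : MonotoneOn (fun k => y (k + 1) - y k) (Set.Icc 1 (m - 1)))
    (hab : a < b) (hbc : b ≤ c) (hcd : c < d)
    (hJ : y 1 ≤ a) (hJ' : b ≤ y m) :
    ((((Finset.Icc 1 m).filter fun k => y k ∈ Set.Ico c d).card : ℝ) - 1) / (d - c) ≤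
      ((((Finset.Icc 1 m).filter fun k => y k ∈ Set.Ico a b).card : ℝ) + 1) / (b - a) :=
  count_compare_general m y a b c d hΔ hab hbc hcd hJ
end

section
/- Let $Y = \{y_1, \ldots, y_m\}$, $m \ge 2$, be a finite real sequence such that both $(y_k)$ and $(\Delta y_k)$ are monotonic. Then the discrepancy satisfies $D(Y) \le 2\left(\frac{|y_m - y_1|}{m} + \frac{\max_{j \in \mathbb{Z}} \#\{k : y_k \in [j, j+1)\}}{m}\right)$. -/
open scoped Classical in
/-- Discrepancy of the finite sequence `(y k)` for `k` in the index set `s`. -/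
noncomputable def disc (s : Finset ℕ) (y : ℕ → ℝ) : ℝ :=
  ⨆ p : {p : ℝ × ℝ // 0 ≤ p.1 ∧ p.1 < p.2 ∧ p.2 ≤ 1},
    |((s.filter fun k => Int.fract (y k) ∈ Set.Ico p.1.1 p.1.2).card : ℝ) / s.card
      - (p.1.2 - p.1.1)|

/-!
With `ℓ = b - a`, the points with `fract (y k) ∈ [a, b)` are those on the arc `a + [0, ℓ)` of
`ℝ / ℤ`. The complementary arc has length `1 - ℓ`, so a lower bound `ℓ m - E` for all arc counts
is also an upper bound `ℓ m + E`. Reversing the order of the indices preserves arc counts, and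
lower bounds for `x` pass to `-x` because an arc `(u, u + ℓ]` contains the arcs `[u + ε, u + ℓ)`;
so we may assume that `y` is increasing with increasing differences.

Such a sequence gets sparser to the right: if `y 1 ≤ t ≤ t'`, the window `[t', t' + ℓ)` contains
at most one point more than `[t, t + ℓ)`. Let `T` be the first point of `a + ℤ` at or after
`y 1`. The arc count is at least the sum of the windows at `T - 1, T, …, T + R - 1`, where
`R ≤ y m - y 1 + 1`, and the window at `T + j` is at least the average of the windows at
`T + j + i / q`, `i < q`, minus one. The windows at `T + n / q`, `n ≥ 0`, cover every point
`y k ≥ T + ℓ` at least `q ℓ - 1` times, and the points below `T + ℓ` lie in the window at `T - 1`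
or in a unit interval. Letting `q → ∞` gives `E = L + K + 1`, where `L = y m - y 1` and `K ≤ 2 M`
bounds the number of points in a closed unit interval. This is at most `2 (L + M)` when `L ≥ 1`;
otherwise all points lie in one unit interval and `m ≤ 2 M`.
-/

open Finset Filter Topology

lemma Int.fract_sub_of_le {u ℓ : ℝ} (hℓ : 0 ≤ ℓ) (h : ℓ ≤ Int.fract u) :
    Int.fract (u - ℓ) = Int.fract u - ℓ :=
  Int.fract_eq_iff.2 ⟨by linarith, by linarith [Int.fract_lt_one u], ⌊u⌋, by rw [Int.fract]; ring⟩

lemma Int.fract_sub_of_lt {u ℓ : ℝ} (hℓ : ℓ ≤ 1) (h : Int.fract u < ℓ) :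
    Int.fract (u - ℓ) = Int.fract u - ℓ + 1 :=
  Int.fract_eq_iff.2 ⟨by linarith [Int.fract_nonneg u], by linarith, ⌊u⌋ - 1, by
    rw [Int.fract]; push_cast; ring⟩

lemma Int.fract_mem_Ico_iff {y a b : ℝ} (ha0 : 0 ≤ a) (ha1 : a ≤ 1) (hb : b ≤ 1) :
    Int.fract y ∈ Set.Ico a b ↔ Int.fract (y - a) < b - a := by
  rcases le_or_gt a (Int.fract y) with h | h
  · simp [Int.fract_sub_of_le ha0 h, h]
  · rw [Int.fract_sub_of_lt ha1 h]
    simp only [Set.mem_Ico, not_le.2 h, false_and, false_iff, not_lt]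
    linarith [Int.fract_nonneg y]

lemma le_card_filter_grid {q R : ℕ} (hq : 0 < q) {T ℓ y : ℝ} (hℓ : 0 ≤ ℓ) (hℓy : T + ℓ ≤ y)
    (hyR : y < T + R) :
    q * ℓ - 1 ≤ #{n ∈ range (q * R) | y ∈ Set.Ico (T + ((n : ℕ) : ℝ) / q) (T + n / q + ℓ)} := by
  have hq' : (0 : ℝ) < q := by exact_mod_cast hq
  set a := q * (y - T - ℓ)
  set b := q * (y - T)
  have ha : 0 ≤ a := mul_nonneg hq'.le (by linarith)
  have hab : a ≤ b := mul_le_mul_of_nonneg_left (by linarith) hq'.le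
  have hsub : Ioc ⌊a⌋₊ ⌊b⌋₊ ⊆
      {n ∈ range (q * R) | y ∈ Set.Ico (T + ((n : ℕ) : ℝ) / q) (T + n / q + ℓ)} := by
    intro n hn
    rw [mem_Ioc, Nat.floor_lt ha, Nat.le_floor_iff (ha.trans hab)] at hn
    simp only [mem_filter, mem_range, Set.mem_Ico]
    refine ⟨?_, ?_, ?_⟩
    · have : (n : ℝ) < q * R := by simp only [b] at hn; nlinarith
      exact_mod_cast this
    · have : (n : ℝ) / q ≤ y - T := by rw [div_le_iff₀ hq']; linarith [hn.2]
      linarith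
    · have : y - T - ℓ < n / q := by rw [lt_div_iff₀ hq']; linarith [hn.1]
      linarith
  calc (q : ℝ) * ℓ - 1 = b - 1 - a := by ring
    _ ≤ ⌊b⌋₊ - ⌊a⌋₊ := by linarith [Nat.lt_floor_add_one b, Nat.floor_le ha]
    _ = #(Ioc ⌊a⌋₊ ⌊b⌋₊) := by rw [Nat.card_Ioc, Nat.cast_sub (Nat.floor_le_floor hab)]
    _ ≤ _ := by exact_mod_cast card_le_card hsub

lemma sum_range_mul_div {M : Type*} [AddCommMonoid M] (f : ℕ → M) (q R : ℕ) :
    ∑ n ∈ range (q * R), f (n / q) = q • ∑ j ∈ range R, f j := by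
  induction R with
  | zero => simp
  | succ R ih =>
    rcases q.eq_zero_or_pos with rfl | hq
    · simp
    rw [mul_add_one, sum_range_add, ih, sum_range_succ, smul_add]
    congr 1
    rw [sum_congr rfl fun i hi => by
      rw [Nat.mul_add_div hq, Nat.div_eq_of_lt (mem_range.1 hi), add_zero]]
    simp

noncomputable def arcCount {ι : Type*} (s : Finset ι) (x : ι → ℝ) (c ℓ : ℝ) : ℕ :=
  #{k ∈ s | Int.fract (x k - c) < ℓ}

noncomputable def windowCount {ι : Type*} (s : Finset ι) (x : ι → ℝ) (t ℓ : ℝ) : ℕ :=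
  #{k ∈ s | x k ∈ Set.Ico t (t + ℓ)}

def ArcLowerBound {ι : Type*} (s : Finset ι) (x : ι → ℝ) (E : ℝ) : Prop :=
  ∀ c ℓ : ℝ, 0 ≤ ℓ → ℓ ≤ 1 → ℓ * #s - E ≤ arcCount s x c ℓ

section Counting

variable {ι : Type*} {s : Finset ι} {x : ι → ℝ} {E : ℝ}

lemma arcCount_add_arcCount_compl (c : ℝ) {ℓ : ℝ} (hℓ0 : 0 ≤ ℓ) (hℓ1 : ℓ ≤ 1) :
    arcCount s x c ℓ + arcCount s x (c + ℓ) (1 - ℓ) = #s := by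
  have hcompl : ∀ k, Int.fract (x k - (c + ℓ)) < 1 - ℓ ↔ ¬ Int.fract (x k - c) < ℓ := by
    intro k
    rw [← sub_sub]
    rcases le_or_gt ℓ (Int.fract (x k - c)) with h | h
    · simp [Int.fract_sub_of_le hℓ0 h, h, Int.fract_lt_one]
    · simp [Int.fract_sub_of_lt hℓ1 h, h]
      linarith [Int.fract_nonneg (x k - c)]
  rw [arcCount, arcCount, filter_congr fun k _ => hcompl k, card_filter_add_card_filter_not]

lemma abs_arcCount_sub_le_card (c : ℝ) {ℓ : ℝ} (hℓ0 : 0 ≤ ℓ) (hℓ1 : ℓ ≤ 1) :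
    |(arcCount s x c ℓ : ℝ) - ℓ * #s| ≤ #s := by
  have : (arcCount s x c ℓ : ℝ) ≤ #s := by exact_mod_cast card_filter_le _ _
  rw [abs_le]
  constructor <;> nlinarith [(Nat.cast_nonneg _ : (0 : ℝ) ≤ arcCount s x c ℓ)]

lemma ArcLowerBound.abs_sub_le (h : ArcLowerBound s x E) (c : ℝ) {ℓ : ℝ} (hℓ0 : 0 ≤ ℓ)
    (hℓ1 : ℓ ≤ 1) : |(arcCount s x c ℓ : ℝ) - ℓ * #s| ≤ E := by
  have hsum : (arcCount s x c ℓ : ℝ) + arcCount s x (c + ℓ) (1 - ℓ) = #s := by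
    exact_mod_cast arcCount_add_arcCount_compl c hℓ0 hℓ1
  have := h (c + ℓ) (1 - ℓ) (by linarith) (by linarith)
  rw [abs_le]
  constructor <;> linarith [h c ℓ hℓ0 hℓ1]

lemma arcCount_le_arcCount_neg (c : ℝ) {ℓ ℓ' : ℝ} (hℓ' : ℓ' < ℓ) (hℓ1 : ℓ ≤ 1) :
    arcCount s x (-c - ℓ') ℓ' ≤ arcCount s (fun k => -x k) c ℓ := by
  refine card_le_card (monotone_filter_right s fun k _ hk => ?_)
  have hfract : Int.fract (-x k - c) = ℓ' - Int.fract (x k - (-c - ℓ')) :=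
    Int.fract_eq_iff.2 ⟨by linarith, by linarith [Int.fract_nonneg (x k - (-c - ℓ'))],
      -⌊x k - (-c - ℓ')⌋, by rw [Int.fract]; push_cast; ring⟩
  rw [hfract]
  linarith [Int.fract_nonneg (x k - (-c - ℓ'))]

lemma ArcLowerBound.neg (h : ArcLowerBound s x E) : ArcLowerBound s (fun k => -x k) E := by
  intro c ℓ hℓ0 hℓ1
  have hbound : ∀ ℓ' ∈ Set.Ico 0 ℓ, ℓ' * #s - E ≤ arcCount s (fun k => -x k) c ℓ :=
    fun ℓ' hℓ' => (h _ ℓ' hℓ'.1 (by linarith [hℓ'.2])).trans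
      (by exact_mod_cast arcCount_le_arcCount_neg c hℓ'.2 hℓ1)
  rcases hℓ0.eq_or_lt with rfl | hℓ
  · simpa using (h c 0 le_rfl zero_le_one).trans (by simp [arcCount, (Int.fract_nonneg _).not_gt])
  · exact le_of_tendsto ((Continuous.tendsto (by fun_prop) ℓ).mono_left nhdsWithin_le_nhds)
      (eventually_of_mem (Ico_mem_nhdsLT hℓ) hbound)

lemma sum_windowCount_le_arcCount (c : ℝ) {ℓ : ℝ} (hℓ1 : ℓ ≤ 1) (n : ℤ) (R : ℕ) :
    ∑ j ∈ range R, windowCount s x (c + n + j) ℓ ≤ arcCount s x c ℓ := by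
  classical
  simp only [windowCount]
  rw [← card_biUnion]
  · refine card_le_card (biUnion_subset.2 fun j _ k hk => ?_)
    simp only [mem_filter, Set.mem_Ico] at hk ⊢
    refine ⟨hk.1, ?_⟩
    have : Int.fract (x k - c) = x k - c - (n + j) :=
      Int.fract_eq_iff.2 ⟨by linarith, by linarith, n + j, by push_cast; ring⟩
    linarith
  · intro j _ j' _ hjj'
    refine disjoint_filter.2 fun k _ hk hk' => hjj' ?_
    simp only [Set.mem_Ico] at hk hk'
    have h1 : (j : ℝ) < j' + 1 := by linarith
    have h2 : (j' : ℝ) < j + 1 := by linarith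
    norm_cast at h1 h2
    omega

lemma sum_windowCount_grid_ge {T ℓ : ℝ} {q R K : ℕ} (hq : 0 < q) (hℓ0 : 0 ≤ ℓ) (hℓ1 : ℓ ≤ 1)
    (hs : ∀ k ∈ s, x k ∈ Set.Ico (T - 1) (T + R))
    (hK : #{k ∈ s | x k ∈ Set.Icc (T - 1 + ℓ) (T + ℓ)} ≤ K) :
    ((q : ℝ) * ℓ - 1) * #s - q * K ≤
      q * windowCount s x (T - 1) ℓ + ∑ n ∈ range (q * R), (windowCount s x (T + n / q) ℓ : ℝ) := by
  classical
  have hswap : ∑ n ∈ range (q * R), windowCount s x (T + n / q) ℓ =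
      ∑ k ∈ s, #{n ∈ range (q * R) | x k ∈ Set.Ico (T + ((n : ℕ) : ℝ) / q) (T + n / q + ℓ)} :=
    sum_card_bipartiteAbove_eq_sum_card_bipartiteBelow _
  have hpoint : ∀ k ∈ s,
      (q * ℓ - 1 : ℝ) - q * (if x k ∈ Set.Icc (T - 1 + ℓ) (T + ℓ) then 1 else 0) ≤
        q * (if x k ∈ Set.Ico (T - 1) (T - 1 + ℓ) then 1 else 0) +
          #{n ∈ range (q * R) | x k ∈ Set.Ico (T + ((n : ℕ) : ℝ) / q) (T + n / q + ℓ)} := by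
    intro k hk
    obtain ⟨hk1, hkR⟩ := hs k hk
    have hq' : (1 : ℝ) ≤ q := by exact_mod_cast hq
    have hgrid := Nat.cast_nonneg (α := ℝ)
      #{n ∈ range (q * R) | x k ∈ Set.Ico (T + ((n : ℕ) : ℝ) / q) (T + n / q + ℓ)}
    by_cases hfirst : x k < T - 1 + ℓ
    · rw [if_pos (show x k ∈ Set.Ico (T - 1) (T - 1 + ℓ) from ⟨hk1, hfirst⟩)]
      split_ifs <;> nlinarith
    by_cases hunit : x k ≤ T + ℓ
    · rw [if_pos (show x k ∈ Set.Icc (T - 1 + ℓ) (T + ℓ) from ⟨not_lt.1 hfirst, hunit⟩)]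
      split_ifs <;> nlinarith
    rw [if_neg fun h => hunit h.2, if_neg fun h => hfirst h.2]
    linarith [le_card_filter_grid hq hℓ0 (not_le.1 hunit).le hkR]
  have hsum := sum_le_sum hpoint
  simp only [sum_sub_distrib, sum_add_distrib, ← mul_sum, sum_const, sum_boole, nsmul_eq_mul]
    at hsum
  rw [← Nat.cast_sum, hswap]
  push_cast
  have hK' : (#{k ∈ s | x k ∈ Set.Icc (T - 1 + ℓ) (T + ℓ)} : ℝ) ≤ K := by exact_mod_cast hK
  simp only [windowCount]
  nlinarith

lemma card_filter_mem_Icc_le_two_mul {M : ℕ}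
    (hM : ∀ j : ℤ, #{k ∈ s | x k ∈ Set.Ico (j : ℝ) (j + 1)} ≤ M) (t : ℝ) :
    #{k ∈ s | x k ∈ Set.Icc t (t + 1)} ≤ 2 * M := by
  classical
  have hsub : {k ∈ s | x k ∈ Set.Icc t (t + 1)} ⊆
      {k ∈ s | x k ∈ Set.Ico (⌊t⌋ : ℝ) (⌊t⌋ + 1)} ∪
        {k ∈ s | x k ∈ Set.Ico ((⌊t⌋ + 1 : ℤ) : ℝ) ((⌊t⌋ + 1 : ℤ) + 1)} := by
    intro k hk
    simp only [mem_union, mem_filter, Set.mem_Icc, Set.mem_Ico, Int.cast_add, Int.cast_one]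
      at hk ⊢
    have := Int.floor_le t
    have := Int.lt_floor_add_one t
    by_cases h : x k < ⌊t⌋ + 1
    · exact Or.inl ⟨hk.1, by linarith, h⟩
    · exact Or.inr ⟨hk.1, by linarith, by linarith⟩
  calc _ ≤ _ := card_le_card hsub
    _ ≤ _ := card_union_le _ _
    _ ≤ M + M := add_le_add (hM _) (hM _)
    _ = 2 * M := (two_mul M).symm

end Counting

section Convex

variable {m : ℕ} {x : ℕ → ℝ}

lemma sub_le_sub_of_monotoneOn_diff
    (hΔ : MonotoneOn (fun k => x (k + 1) - x k) (Set.Icc 1 (m - 1)))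
    {a b r : ℕ} (ha : 1 ≤ a) (hab : a ≤ b) (hbr : b + r ≤ m) :
    x (a + r) - x a ≤ x (b + r) - x b := by
  have htel := fun c => sum_range_sub (fun i => x (c + i)) r
  simp only [add_zero, ← add_assoc] at htel
  rw [← htel a, ← htel b]
  refine sum_le_sum fun i hi => ?_
  have hi := mem_range.1 hi
  exact hΔ ⟨by omega, by omega⟩ ⟨by omega, by omega⟩ (by omega)

lemma windowCount_le_windowCount_add_one (hx : MonotoneOn x (Set.Icc 1 m))
    (hΔ : MonotoneOn (fun k => x (k + 1) - x k) (Set.Icc 1 (m - 1))) {t t' ℓ : ℝ}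
    (h1 : x 1 ≤ t) (htt' : t ≤ t') :
    windowCount (Icc 1 m) x t' ℓ ≤ windowCount (Icc 1 m) x t ℓ + 1 := by
  set S' := {k ∈ Icc 1 m | x k ∈ Set.Ico t' (t' + ℓ)}
  change #S' ≤ #{k ∈ Icc 1 m | x k ∈ Set.Ico t (t + ℓ)} + 1
  rcases S'.eq_empty_or_nonempty with hS' | hS'
  · simp [hS']
  obtain ⟨hp, hxp⟩ := mem_filter.1 (S'.min'_mem hS')
  obtain ⟨hq, hxq⟩ := mem_filter.1 (S'.max'_mem hS')
  have hpq := S'.min'_le _ (S'.max'_mem hS')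
  set p := S'.min' hS'
  set q := S'.max' hS'
  rw [mem_Icc] at hp hq
  have hS'card : #S' ≤ q + 1 - p := by
    rw [← Nat.card_Icc]
    exact card_le_card fun k hk => mem_Icc.2 ⟨S'.min'_le k hk, S'.le_max' k hk⟩
  -- After the last index `a ≤ p` with `x a ≤ t`, the next `q - p` points lie in `[t, t + ℓ)`:
  -- the `q - p` gaps following `a` add up to at most `x q - x p < ℓ`.
  set A := {k ∈ Icc 1 p | x k ≤ t}
  have hA : A.Nonempty := ⟨1, mem_filter.2 ⟨mem_Icc.2 ⟨le_rfl, hp.1⟩, h1⟩⟩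
  obtain ⟨ha, hxa⟩ := mem_filter.1 (A.max'_mem hA)
  set a := A.max' hA
  rw [mem_Icc] at ha
  have hrun : Ioc a (a + (q - p)) ⊆ {k ∈ Icc 1 m | x k ∈ Set.Ico t (t + ℓ)} := by
    intro k hk
    rw [mem_Ioc] at hk
    have hkm : k ∈ Set.Icc 1 m := ⟨by omega, by omega⟩
    refine mem_filter.2 ⟨mem_Icc.2 hkm, ?_, ?_⟩
    · by_cases hkp : k ≤ p
      · by_contra hxk
        have : k ∈ A := mem_filter.2 ⟨mem_Icc.2 ⟨by omega, hkp⟩, (not_le.1 hxk).le⟩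
        exact absurd (A.le_max' k this) (by omega)
      · exact htt'.trans (hxp.1.trans (hx ⟨hp.1, hp.2⟩ hkm (by omega)))
    · have hgaps := sub_le_sub_of_monotoneOn_diff hΔ (r := q - p) ha.1 ha.2 (by omega)
      rw [show p + (q - p) = q by omega] at hgaps
      have := hx hkm ⟨by omega, by omega⟩ hk.2
      linarith [hxp.1, hxq.2]
  have := card_le_card hrun
  rw [Nat.card_Ioc] at this
  omega

lemma sum_windowCount_grid_le (hx : MonotoneOn x (Set.Icc 1 m))
    (hΔ : MonotoneOn (fun k => x (k + 1) - x k) (Set.Icc 1 (m - 1))) {T ℓ : ℝ} (hT : x 1 ≤ T)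
    (q R : ℕ) :
    ∑ n ∈ range (q * R), windowCount (Icc 1 m) x (T + n / q) ℓ ≤
      q * ∑ j ∈ range R, windowCount (Icc 1 m) x (T + j) ℓ + q * R := by
  calc ∑ n ∈ range (q * R), windowCount (Icc 1 m) x (T + n / q) ℓ
      ≤ ∑ n ∈ range (q * R), (windowCount (Icc 1 m) x (T + (n / q : ℕ)) ℓ + 1) :=
        sum_le_sum fun n _ => windowCount_le_windowCount_add_one hx hΔ
          (by linarith [(Nat.cast_nonneg (n / q) : (0 : ℝ) ≤ _)])
          (by linarith [(Nat.cast_div_le : ((n / q : ℕ) : ℝ) ≤ n / q)])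
    _ = q * ∑ j ∈ range R, windowCount (Icc 1 m) x (T + j) ℓ + q * R := by
        rw [sum_add_distrib, sum_range_mul_div (fun j => windowCount (Icc 1 m) x (T + j) ℓ)]
        simp

lemma arcCount_ge_sub_div (hm : 1 ≤ m) (hx : MonotoneOn x (Set.Icc 1 m))
    (hΔ : MonotoneOn (fun k => x (k + 1) - x k) (Set.Icc 1 (m - 1))) {K : ℕ}
    (hK : ∀ t, #{k ∈ Icc 1 m | x k ∈ Set.Icc t (t + 1)} ≤ K) (c : ℝ) {ℓ : ℝ} (hℓ0 : 0 ≤ ℓ)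
    (hℓ1 : ℓ ≤ 1) {q : ℕ} (hq : 0 < q) :
    ℓ * m - (x m - x 1 + K + 1) - m / q ≤ arcCount (Icc 1 m) x c ℓ := by
  have hq' : (0 : ℝ) < q := by exact_mod_cast hq
  have hmem : ∀ k ∈ Icc 1 m, x k ∈ Set.Icc (x 1) (x m) := fun k hk =>
    ⟨hx ⟨le_rfl, hm⟩ (coe_Icc 1 m ▸ hk) (mem_Icc.1 hk).1,
      hx (coe_Icc 1 m ▸ hk) ⟨hm, le_rfl⟩ (mem_Icc.1 hk).2⟩
  set W := fun t => windowCount (Icc 1 m) x t ℓ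
  set T := c + ⌈x 1 - c⌉
  have hT1 : x 1 ≤ T := by linarith [Int.le_ceil (x 1 - c)]
  have hT2 : T < x 1 + 1 := by linarith [Int.ceil_lt_add_one (x 1 - c)]
  set R := ⌊x m - T⌋₊ + 1
  have hR : x m < T + R := by push_cast [R]; linarith [Nat.lt_floor_add_one (x m - T)]
  have hRL : (R : ℝ) ≤ x m - x 1 + 1 := by
    have hx1m := hmem m (mem_Icc.2 ⟨hm, le_rfl⟩)
    have : (⌊x m - T⌋₊ : ℝ) ≤ x m - x 1 :=
      (Nat.cast_le.2 (Nat.floor_le_floor (by linarith))).trans (Nat.floor_le (by linarith [hx1m.1]))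
    push_cast [R]; linarith
  have hdecomp : W (T - 1) + ∑ j ∈ range R, W (T + j) ≤ arcCount (Icc 1 m) x c ℓ := by
    have := sum_windowCount_le_arcCount (s := Icc 1 m) (x := x) c hℓ1 (⌈x 1 - c⌉ - 1) (R + 1)
    rw [sum_range_succ', add_comm] at this
    convert this using 4 <;> simp only [T] <;> push_cast <;> ring
  have hshift : ∑ n ∈ range (q * R), W (T + n / q) ≤ q * ∑ j ∈ range R, W (T + j) + q * R :=
    sum_windowCount_grid_le hx hΔ hT1 q R
  have hgrid := sum_windowCount_grid_ge (s := Icc 1 m) (x := x) (T := T) (R := R) hq hℓ0 hℓ1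
    (fun k hk => ⟨by linarith [(hmem k hk).1], by linarith [(hmem k hk).2]⟩)
    (by simpa only [sub_add_cancel, add_right_comm _ ℓ] using hK (T - 1 + ℓ))
  rw [Nat.card_Icc, add_tsub_cancel_right] at hgrid
  change _ ≤ q * (W (T - 1) : ℝ) + ∑ n ∈ range (q * R), (W (T + n / q) : ℝ) at hgrid
  have hdecomp' : (W (T - 1) : ℝ) + ∑ j ∈ range R, (W (T + j) : ℝ) ≤ arcCount (Icc 1 m) x c ℓ := by
    exact_mod_cast hdecomp
  have hshift' : ∑ n ∈ range (q * R), (W (T + n / q) : ℝ) ≤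
      q * ∑ j ∈ range R, (W (T + j) : ℝ) + q * R := by
    exact_mod_cast hshift
  rw [← mul_le_mul_iff_of_pos_left hq']
  calc (q : ℝ) * (ℓ * m - (x m - x 1 + K + 1) - m / q)
      = (q * ℓ - 1) * m - q * K - q * (x m - x 1 + 1) := by field_simp; ring
    _ ≤ (q * ℓ - 1) * m - q * K - q * R := by gcongr
    _ ≤ q * ((W (T - 1) : ℝ) + ∑ j ∈ range R, (W (T + j) : ℝ)) := by linarith
    _ ≤ q * arcCount (Icc 1 m) x c ℓ := by gcongr

lemma arcLowerBound_of_convex (hm : 1 ≤ m) (hx : MonotoneOn x (Set.Icc 1 m))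
    (hΔ : MonotoneOn (fun k => x (k + 1) - x k) (Set.Icc 1 (m - 1))) {K : ℕ}
    (hK : ∀ t, #{k ∈ Icc 1 m | x k ∈ Set.Icc t (t + 1)} ≤ K) :
    ArcLowerBound (Icc 1 m) x (x m - x 1 + K + 1) := by
  intro c ℓ hℓ0 hℓ1
  rw [Nat.card_Icc, add_tsub_cancel_right]
  refine le_of_tendsto ?_
    (eventually_atTop.2 ⟨1, fun q hq => arcCount_ge_sub_div hm hx hΔ hK c hℓ0 hℓ1 hq⟩)
  simpa using tendsto_const_nhds.sub (tendsto_const_div_atTop_nhds_zero_nat (m : ℝ))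

end Convex

section Reduction

variable {m K : ℕ} {y : ℕ → ℝ}

lemma card_filter_Icc_reflect (m : ℕ) (p : ℕ → Prop) [DecidablePred p] :
    #{k ∈ Icc 1 m | p (m + 1 - k)} = #{k ∈ Icc 1 m | p k} := by
  refine card_nbij' (m + 1 - ·) (m + 1 - ·) ?_ ?_ ?_ ?_ <;> intro k hk <;>
    simp only [coe_filter, mem_Icc, Set.mem_ofPred_eq] at hk ⊢
  · exact ⟨by omega, hk.2⟩
  · exact ⟨by omega, by rw [show m + 1 - (m + 1 - k) = k by omega]; exact hk.2⟩
  · omega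
  · omega

lemma arcLowerBound_of_monotoneOn_diff (hm : 1 ≤ m)
    (hy : MonotoneOn y (Set.Icc 1 m) ∨ AntitoneOn y (Set.Icc 1 m))
    (hΔ : MonotoneOn (fun k => y (k + 1) - y k) (Set.Icc 1 (m - 1)))
    (hK : ∀ t, #{k ∈ Icc 1 m | y k ∈ Set.Icc t (t + 1)} ≤ K) :
    ArcLowerBound (Icc 1 m) y (|y m - y 1| + K + 1) := by
  have h1 : 1 ∈ Set.Icc 1 m := ⟨le_rfl, hm⟩
  have hm' : m ∈ Set.Icc 1 m := ⟨hm, le_rfl⟩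
  rcases hy with hy | hy
  · rw [abs_of_nonneg (sub_nonneg.2 (hy h1 hm' hm))]
    exact arcLowerBound_of_convex hm hy hΔ hK
  set u := fun k => y (m + 1 - k)
  have hu : MonotoneOn u (Set.Icc 1 m) := fun a ⟨ha1, ha2⟩ b ⟨hb1, hb2⟩ hab =>
    hy ⟨by omega, by omega⟩ ⟨by omega, by omega⟩ (by omega : m + 1 - b ≤ m + 1 - a)
  have huΔ : MonotoneOn (fun k => u (k + 1) - u k) (Set.Icc 1 (m - 1)) := by
    intro a ⟨ha1, ha2⟩ b ⟨hb1, hb2⟩ hab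
    have := hΔ (a := m - b) (b := m - a) ⟨by omega, by omega⟩ ⟨by omega, by omega⟩ (by omega)
    simp only [u] at this ⊢
    rw [show m + 1 - (a + 1) = m - a by omega, show m + 1 - (b + 1) = m - b by omega]
    rw [show m - a + 1 = m + 1 - a by omega, show m - b + 1 = m + 1 - b by omega] at this
    linarith
  have hKu : ∀ t, #{k ∈ Icc 1 m | u k ∈ Set.Icc t (t + 1)} ≤ K := fun t =>
    (card_filter_Icc_reflect m (fun k => y k ∈ Set.Icc t (t + 1))).trans_le (hK t)
  have hLu : u m - u 1 = |y m - y 1| := by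
    simp only [u, Nat.add_sub_cancel_left, add_tsub_cancel_right]
    rw [abs_of_nonpos (sub_nonpos.2 (hy h1 hm' hm))]
    ring
  intro c ℓ hℓ0 hℓ1
  rw [← hLu, arcCount, ← card_filter_Icc_reflect m]
  exact arcLowerBound_of_convex hm hu huΔ hKu c ℓ hℓ0 hℓ1

lemma arcLowerBound_of_monotone_diff (hm : 1 ≤ m)
    (hy : MonotoneOn y (Set.Icc 1 m) ∨ AntitoneOn y (Set.Icc 1 m))
    (hΔ : MonotoneOn (fun k => y (k + 1) - y k) (Set.Icc 1 (m - 1)) ∨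
          AntitoneOn (fun k => y (k + 1) - y k) (Set.Icc 1 (m - 1)))
    (hK : ∀ t, #{k ∈ Icc 1 m | y k ∈ Set.Icc t (t + 1)} ≤ K) :
    ArcLowerBound (Icc 1 m) y (|y m - y 1| + K + 1) := by
  rcases hΔ with hΔ | hΔ
  · exact arcLowerBound_of_monotoneOn_diff hm hy hΔ hK
  have hneg := arcLowerBound_of_monotoneOn_diff (y := fun k => -y k) hm
    (hy.symm.imp AntitoneOn.neg MonotoneOn.neg)
    (fun a ha b hb hab => by linarith [hΔ ha hb hab])
    (fun t => (card_le_card fun k hk => by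
      simp only [mem_filter, Set.mem_Icc] at hk ⊢
      exact ⟨hk.1, by linarith, by linarith⟩).trans (hK (-t - 1)))
  simpa only [neg_neg, neg_sub_neg, abs_sub_comm] using hneg.neg

lemma card_le_of_abs_sub_le_one (hy : MonotoneOn y (Set.Icc 1 m) ∨ AntitoneOn y (Set.Icc 1 m))
    (hK : ∀ t, #{k ∈ Icc 1 m | y k ∈ Set.Icc t (t + 1)} ≤ K) (hL : |y m - y 1| ≤ 1) : m ≤ K := by
  have hsub : Set.uIcc (y 1) (y m) ⊆ Set.Icc (min (y 1) (y m)) (min (y 1) (y m) + 1) := by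
    refine Set.Icc_subset_Icc le_rfl ?_
    linarith [max_sub_min_eq_abs' (y m) (y 1), min_comm (y 1) (y m), max_comm (y 1) (y m)]
  calc m = #{k ∈ Icc 1 m | y k ∈ Set.Icc (min (y 1) (y m)) (min (y 1) (y m) + 1)} := by
        rw [filter_true_of_mem, Nat.card_Icc, add_tsub_cancel_right]
        intro k hk
        have hk : k ∈ Set.Icc 1 m := coe_Icc 1 m ▸ hk
        have h1 : 1 ∈ Set.Icc 1 m := ⟨le_rfl, hk.1.trans hk.2⟩
        have hm : m ∈ Set.Icc 1 m := ⟨hk.1.trans hk.2, le_rfl⟩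
        refine hsub ?_
        rcases hy with hy | hy
        · exact Set.mem_uIcc.2 (Or.inl ⟨hy h1 hk hk.1, hy hk hm hk.2⟩)
        · exact Set.mem_uIcc.2 (Or.inr ⟨hy hk hm hk.2, hy h1 hk hk.1⟩)
    _ ≤ K := hK _

lemma abs_arcCount_sub_le_of_monotone_diff {M : ℕ} (hm : 1 ≤ m)
    (hy : MonotoneOn y (Set.Icc 1 m) ∨ AntitoneOn y (Set.Icc 1 m))
    (hΔ : MonotoneOn (fun k => y (k + 1) - y k) (Set.Icc 1 (m - 1)) ∨
          AntitoneOn (fun k => y (k + 1) - y k) (Set.Icc 1 (m - 1)))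
    (hM : ∀ j : ℤ, #{k ∈ Icc 1 m | y k ∈ Set.Ico (j : ℝ) (j + 1)} ≤ M) (c : ℝ) {ℓ : ℝ}
    (hℓ0 : 0 ≤ ℓ) (hℓ1 : ℓ ≤ 1) :
    |(arcCount (Icc 1 m) y c ℓ : ℝ) - ℓ * m| ≤ 2 * (|y m - y 1| + M) := by
  have hK := card_filter_mem_Icc_le_two_mul hM
  have hcard : ((Icc 1 m).card : ℝ) = m := by rw [Nat.card_Icc, add_tsub_cancel_right]
  by_cases hL : 1 ≤ |y m - y 1|
  · have := (arcLowerBound_of_monotone_diff hm hy hΔ hK).abs_sub_le c hℓ0 hℓ1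
    push_cast [hcard] at this
    linarith
  · have := abs_arcCount_sub_le_card (s := Icc 1 m) (x := y) c hℓ0 hℓ1
    have hmK : (m : ℝ) ≤ 2 * M := by exact_mod_cast card_le_of_abs_sub_le_one hy hK (by linarith)
    rw [hcard] at this
    linarith [abs_nonneg (y m - y 1)]

end Reduction

theorem disc_le_of_monotone_diff_general (m : ℕ) (y : ℕ → ℝ) (M : ℕ) (hm : 2 ≤ m)
    (hy : MonotoneOn y (Set.Icc 1 m) ∨ AntitoneOn y (Set.Icc 1 m))
    (hΔ : MonotoneOn (fun k => y (k + 1) - y k) (Set.Icc 1 (m - 1)) ∨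
          AntitoneOn (fun k => y (k + 1) - y k) (Set.Icc 1 (m - 1)))
    (hM : ∀ j : ℤ, ((Finset.Icc 1 m).filter fun k =>
            y k ∈ Set.Ico (j : ℝ) (j + 1)).card ≤ M) :
    disc (Finset.Icc 1 m) y ≤ 2 * (|y m - y 1| / m + (M : ℝ) / m) := by
  have hm0 : (0 : ℝ) < m := by positivity
  have : Nonempty {p : ℝ × ℝ // 0 ≤ p.1 ∧ p.1 < p.2 ∧ p.2 ≤ 1} := ⟨⟨(0, 1), by norm_num⟩⟩
  refine ciSup_le fun ⟨(a, b), ha, hab, hb⟩ => ?_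
  have hcount :
      #{k ∈ Icc 1 m | Int.fract (y k) ∈ Set.Ico a b} = arcCount (Icc 1 m) y a (b - a) := by
    simp only [arcCount]
    congr
    ext k
    exact Int.fract_mem_Ico_iff ha (hab.le.trans hb) hb
  rw [hcount, Nat.card_Icc, add_tsub_cancel_right]
  calc |(arcCount (Icc 1 m) y a (b - a) : ℝ) / m - (b - a)|
      = |(arcCount (Icc 1 m) y a (b - a) : ℝ) - (b - a) * m| / m := by
        rw [← abs_of_pos hm0, ← abs_div, abs_of_pos hm0, sub_div, mul_div_cancel_right₀ _ hm0.ne']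
    _ ≤ 2 * (|y m - y 1| + M) / m := by
        gcongr
        exact abs_arcCount_sub_le_of_monotone_diff (by omega) hy hΔ hM a (by linarith) (by linarith)
    _ = 2 * (|y m - y 1| / m + M / m) := by ring

/-- Lemma 5: discrepancy bound via the range and the maximal number of points
in a unit interval. -/
theorem disc_le_of_monotone_diff (m : ℕ) (y : ℕ → ℝ) (M : ℕ) (hm : 2 ≤ m)
    (hy : MonotoneOn y (Set.Icc 1 m) ∨ AntitoneOn y (Set.Icc 1 m))
    (hΔ : MonotoneOn (fun k => y (k + 1) - y k) (Set.Icc 1 (m - 1)) ∨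
          AntitoneOn (fun k => y (k + 1) - y k) (Set.Icc 1 (m - 1)))
    (hM : ∀ j : ℤ, ((Finset.Icc 1 m).filter fun k =>
            y k ∈ Set.Ico (j : ℝ) (j + 1)).card ≤ M)
    (hM' : ∃ j : ℤ, ((Finset.Icc 1 m).filter fun k =>
            y k ∈ Set.Ico (j : ℝ) (j + 1)).card = M) :
    disc (Finset.Icc 1 m) y ≤ 2 * (|y m - y 1| / m + (M : ℝ) / m) :=
  disc_le_of_monotone_diff_general m y M hm hy hΔ hM
end

section
/- Let $Y = \{y_1, \ldots, y_m\}$, $m \ge 2$, be a finite real sequence such that both $(y_k)$ and $(\Delta y_k)$ are monotonic. Then $D(Y) \le 2\left(\max_k |\Delta y_k| + \frac{\max_{j \in \mathbb{Z}} \#\{k : y_k \in [j, j+1)\}}{m}\right)$. -/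
open Finset

theorem sum_le_sum_add_card_mul {ι : Type*} [DecidableEq ι] {S G : Finset ι} {σ : ι → ι}
    {u v : ι → ℝ} {c M : ℝ} (hGS : G ⊆ S) (hσ : Set.InjOn σ G) (hσS : Set.MapsTo σ G S)
    (hv : ∀ j ∈ S, 0 ≤ v j) (hgood : ∀ j ∈ G, u j ≤ v (σ j) + c)
    (hbad : ∀ j ∈ S \ G, u j ≤ M) :
    ∑ j ∈ S, u j ≤ ∑ j ∈ S, v j + #G * c + #(S \ G) * M := by
  have hG : ∑ j ∈ G, u j ≤ ∑ j ∈ S, v j + #G * c := calc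
    ∑ j ∈ G, u j ≤ ∑ j ∈ G, (v (σ j) + c) := sum_le_sum hgood
    _ = ∑ j ∈ G.image σ, v j + #G * c := by
      rw [sum_add_distrib, sum_image hσ, sum_const, nsmul_eq_mul]
    _ ≤ ∑ j ∈ S, v j + #G * c := by
      gcongr ?_ + _
      exact sum_le_sum_of_subset_of_nonneg (image_subset_iff.2 hσS) fun j hj _ => hv j hj
  have hbad' : ∑ j ∈ S \ G, u j ≤ #(S \ G) * M := by
    simpa using sum_le_card_nsmul _ _ _ hbad
  rw [← sum_sdiff hGS]
  linarith

theorem abs_sum_sub_sum_le {ι : Type*} [DecidableEq ι] {S G : Finset ι} {σ : ι → ι}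
    {u v : ι → ℝ} {c M : ℝ} (hGS : G ⊆ S) (hσ : Set.InjOn σ G) (hσS : Set.MapsTo σ G S)
    (hu : ∀ j ∈ S, 0 ≤ u j) (hv : ∀ j ∈ S, 0 ≤ v j) (huv : ∀ j ∈ G, u j ≤ v (σ j) + c)
    (hvu : ∀ j ∈ G, v j ≤ u (σ j) + c) (huM : ∀ j ∈ S \ G, u j ≤ M)
    (hvM : ∀ j ∈ S \ G, v j ≤ M) :
    |∑ j ∈ S, u j - ∑ j ∈ S, v j| ≤ #G * c + #(S \ G) * M := by
  rw [abs_sub_le_iff]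
  constructor
  · linarith [sum_le_sum_add_card_mul hGS hσ hσS hv huv huM]
  · linarith [sum_le_sum_add_card_mul hGS hσ hσS hu hvu hvM]

theorem Int.Ioo_sub_subset_Icc {i₀ i₁ t : ℤ} (ht : |t| ≤ 1) :
    Ioo (i₀ - t) (i₁ - t) ⊆ Icc i₀ i₁ := by
  rw [abs_le] at ht
  intro j hj
  rw [mem_Ioo] at hj
  exact mem_Icc.2 ⟨by omega, by omega⟩

theorem Int.card_Icc_sdiff_Ioo_sub_le {i₀ i₁ t : ℤ} (ht : |t| ≤ 1) :
    #(Icc i₀ i₁ \ Ioo (i₀ - t) (i₁ - t)) ≤ 2 := by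
  rw [card_sdiff_of_subset (Int.Ioo_sub_subset_Icc ht), Int.card_Icc, Int.card_Ioo]
  omega

theorem Int.card_Ioo_floor_le {x z : ℝ} (h : x ≤ z) : (#(Ioo ⌊x⌋ ⌊z⌋) : ℝ) ≤ z - x := by
  have hz := Int.floor_le z
  have hx := Int.lt_floor_add_one x
  rw [Int.card_Ioo]
  rcases le_total (⌊z⌋ - ⌊x⌋ - 1) 0 with hn | hn
  · rw [Int.toNat_of_nonpos hn, Nat.cast_zero]
    linarith
  · have : ((⌊z⌋ - ⌊x⌋ - 1).toNat : ℝ) = ((⌊z⌋ - ⌊x⌋ - 1 : ℤ) : ℝ) := by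
      exact_mod_cast Int.toNat_of_nonneg hn
    push_cast at this
    linarith

theorem Int.lt_and_add_one_le_of_mem_Ioo_floor {x z : ℝ} {i : ℤ} (hi : i ∈ Ioo ⌊x⌋ ⌊z⌋) :
    x < i ∧ (i : ℝ) + 1 ≤ z := by
  rw [mem_Ioo] at hi
  exact ⟨Int.floor_lt.1 hi.1, by exact_mod_cast Int.le_floor.1 (Int.lt_iff_add_one_le.1 hi.2)⟩

theorem Int.fract_mem_Ico_and_floor_eq_iff {x a b : ℝ} {j : ℤ} (ha : 0 ≤ a) (hb : b ≤ 1) :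
    Int.fract x ∈ Set.Ico a b ∧ ⌊x⌋ = j ↔ x ∈ Set.Ico (j + a) (j + b) := by
  simp only [Set.mem_Ico, Int.fract]
  constructor
  · rintro ⟨⟨h₁, h₂⟩, rfl⟩
    constructor <;> linarith
  · rintro ⟨h₁, h₂⟩
    have hj : ⌊x⌋ = j := Int.floor_eq_iff.2 ⟨by linarith, by linarith⟩
    subst hj
    constructor <;> [constructor; rfl] <;> linarith

theorem sub_le_card_mul_of_le {y : ℕ → ℝ} {r s : ℕ} {g : ℝ} (hrs : r ≤ s)
    (h : ∀ k ∈ Ico r s, y (k + 1) - y k ≤ g) : y s - y r ≤ (s - r : ℕ) * g := by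
  rw [← sum_Ico_sub y hrs, ← Nat.card_Ico, ← nsmul_eq_mul]
  exact sum_le_card_nsmul _ _ _ h

theorem card_mul_le_sub_of_le {y : ℕ → ℝ} {p q : ℕ} {g : ℝ} (hpq : p ≤ q)
    (h : ∀ k ∈ Ico p q, g ≤ y (k + 1) - y k) : (q - p : ℕ) * g ≤ y q - y p := by
  rw [← sum_Ico_sub y hpq, ← Nat.card_Ico, ← nsmul_eq_mul]
  exact card_nsmul_le_sum _ _ _ h

open Classical in
noncomputable def countIn (m : ℕ) (y : ℕ → ℝ) (I : Set ℝ) : ℕ :=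
  #{k ∈ Icc 1 m | y k ∈ I}

/-- Every step of `y` that meets `[e, f)` is at most every step of `y` lying inside `[c, d)`. -/
def StepsLe (m : ℕ) (y : ℕ → ℝ) (e f c d : ℝ) : Prop :=
  ∀ k k', 1 ≤ k → k + 1 ≤ m → 1 ≤ k' → k' + 1 ≤ m → y k < f → e ≤ y (k + 1) →
    c ≤ y k' → y (k' + 1) < d → y (k + 1) - y k ≤ y (k' + 1) - y k'

section

variable {m : ℕ} {y : ℕ → ℝ} {I : Set ℝ}

theorem countIn_eq_card_filter [DecidablePred fun k => y k ∈ I] :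
    countIn m y I = #{k ∈ Icc 1 m | y k ∈ I} := by
  rw [countIn]
  congr

theorem le_countIn {s : Finset ℕ} (h : ∀ k ∈ s, k ∈ Icc 1 m ∧ y k ∈ I) :
    #s ≤ countIn m y I := by
  classical
  unfold countIn
  exact card_le_card fun k hk => mem_filter.2 (h k hk)

theorem countIn_le {s : Finset ℕ} (h : ∀ k ∈ Icc 1 m, y k ∈ I → k ∈ s) :
    countIn m y I ≤ #s := by
  classical
  unfold countIn
  exact card_le_card fun k hk => h k (mem_filter.1 hk).1 (mem_filter.1 hk).2

theorem countIn_mono {J : Set ℝ} (hIJ : I ⊆ J) : countIn m y I ≤ countIn m y J :=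
  le_countIn fun k hk => by classical exact ⟨(mem_filter.1 hk).1, hIJ (mem_filter.1 hk).2⟩

theorem countIn_eq_of_forall (h : ∀ k ∈ Icc 1 m, y k ∈ I) : countIn m y I = m :=
  le_antisymm ((countIn_le fun k hk _ => hk).trans (by simp))
    ((le_countIn fun k hk => ⟨hk, h k hk⟩).trans' (by simp))

theorem countIn_reflect : countIn m (fun k => y (m + 1 - k)) I = countIn m y I := by
  classical
  rw [countIn_eq_card_filter, countIn_eq_card_filter]
  refine card_nbij' (m + 1 - ·) (m + 1 - ·) ?_ ?_ ?_ ?_ <;> intro k hk <;>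
    simp only [coe_filter, mem_Icc, Set.mem_ofPred_eq] at hk ⊢ <;>
    have hinv : m + 1 - (m + 1 - k) = k := by omega
  · exact ⟨by omega, hinv ▸ hk.2⟩
  · exact ⟨by omega, by rw [hinv]; exact hk.2⟩
  · exact hinv
  · exact hinv

theorem countIn_fract_eq_sum {T : Finset ℤ} (hT : ∀ k ∈ Icc 1 m, ⌊y k⌋ ∈ T) {a b : ℝ}
    (ha : 0 ≤ a) (hb : b ≤ 1) :
    countIn m (fun k => Int.fract (y k)) (Set.Ico a b) =
      ∑ j ∈ T, countIn m y (Set.Ico (j + a) (j + b)) := by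
  classical
  simp only [countIn_eq_card_filter]
  rw [card_eq_sum_card_fiberwise (f := fun k => ⌊y k⌋) (t := T)]
  · refine sum_congr rfl fun j _ => ?_
    rw [filter_filter]
    simp only [Int.fract_mem_Ico_and_floor_eq_iff ha hb]
  · intro k hk
    exact hT k (mem_filter.1 hk).1

theorem floor_mem_Icc_of_monotoneOn (hy : MonotoneOn y (Set.Icc 1 m)) {k : ℕ}
    (hk : k ∈ Icc 1 m) : ⌊y k⌋ ∈ Icc ⌊y 1⌋ ⌊y m⌋ := by
  rw [mem_Icc] at hk
  exact mem_Icc.2 ⟨Int.floor_le_floor (hy ⟨le_rfl, by omega⟩ hk hk.1),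
    Int.floor_le_floor (hy hk ⟨by omega, le_rfl⟩ hk.2)⟩

theorem sum_countIn_Ico_floor (hy : MonotoneOn y (Set.Icc 1 m)) :
    ∑ j ∈ Icc ⌊y 1⌋ ⌊y m⌋, countIn m y (Set.Ico (j : ℝ) (j + 1)) = m := by
  have hall : countIn m (fun k => Int.fract (y k)) (Set.Ico 0 1) = m :=
    countIn_eq_of_forall fun k _ => ⟨Int.fract_nonneg _, Int.fract_lt_one _⟩
  rw [countIn_fract_eq_sum (fun k => floor_mem_Icc_of_monotoneOn hy) le_rfl le_rfl] at hall
  simpa only [add_zero] using hall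

theorem exists_step_sub_le (hy : MonotoneOn y (Set.Icc 1 m)) (hm1 : 1 ≤ m) {e f : ℝ}
    (hef : e ≤ f) (h1 : y 1 < e) (hm : f ≤ y m) :
    ∃ k, 1 ≤ k ∧ k + 1 ≤ m ∧ y k < f ∧ e ≤ y (k + 1) ∧
      f - e ≤ (countIn m y (Set.Ico e f) + 1) * (y (k + 1) - y k) := by
  obtain ⟨r, hr, hr_max⟩ := (filter (fun k => y k < e) (Icc 1 m)).exists_max_image id
    ⟨1, mem_filter.2 ⟨mem_Icc.2 ⟨le_rfl, hm1⟩, h1⟩⟩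
  obtain ⟨s, hs, hs_min⟩ := (filter (fun k => f ≤ y k) (Icc 1 m)).exists_min_image id
    ⟨m, mem_filter.2 ⟨mem_Icc.2 ⟨hm1, le_rfl⟩, hm⟩⟩
  simp only [mem_filter, mem_Icc, id] at hr hs hr_max hs_min
  -- `r` is the last index below `e` and `s` the first one at or above `f`: the indices strictly
  -- between them lie in `[e, f)`, and `k` is the largest of the steps from `r` to `s`.
  have hrs : r < s := hy.reflect_lt ⟨hr.1.1, hr.1.2⟩ ⟨hs.1.1, hs.1.2⟩ (by linarith)
  have hcount : s - r ≤ countIn m y (Set.Ico e f) + 1 := by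
    have : #(Ioo r s) ≤ countIn m y (Set.Ico e f) := le_countIn fun k hk => by
      rw [mem_Ioo] at hk
      refine ⟨mem_Icc.2 ⟨by omega, by omega⟩, ?_, ?_⟩
      · by_contra! h
        exact absurd (hr_max k ⟨⟨by omega, by omega⟩, h⟩) (by omega)
      · by_contra! h
        exact absurd (hs_min k ⟨⟨by omega, by omega⟩, h⟩) (by omega)
    rw [Nat.card_Ioo] at this
    omega
  obtain ⟨k, hk, hk_max⟩ := (Ico r s).exists_max_image (fun k => y (k + 1) - y k)
    ⟨r, mem_Ico.2 ⟨le_rfl, hrs⟩⟩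
  rw [mem_Ico] at hk
  refine ⟨k, by omega, by omega, ?_, ?_, ?_⟩
  · by_contra! h
    exact absurd (hs_min k ⟨⟨by omega, by omega⟩, h⟩) (by omega)
  · by_contra! h
    exact absurd (hr_max (k + 1) ⟨⟨by omega, by omega⟩, h⟩) (by omega)
  · have hstep : 0 ≤ y (k + 1) - y k :=
      sub_nonneg.2 (hy ⟨by omega, by omega⟩ ⟨by omega, by omega⟩ (by omega))
    calc f - e ≤ y s - y r := by linarith
      _ ≤ (s - r : ℕ) * (y (k + 1) - y k) := sub_le_card_mul_of_le hrs.le hk_max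
      _ ≤ _ := by gcongr; exact_mod_cast hcount

theorem countIn_sub_one_mul_le (hy : MonotoneOn y (Set.Icc 1 m)) {c d g : ℝ} (hcd : c ≤ d)
    (hg : 0 ≤ g) (h : ∀ k, 1 ≤ k → k + 1 ≤ m → c ≤ y k → y (k + 1) < d → g ≤ y (k + 1) - y k) :
    ((countIn m y (Set.Ico c d) - 1 : ℕ) : ℝ) * g ≤ d - c := by
  rcases Nat.eq_zero_or_pos (countIn m y (Set.Ico c d)) with h0 | hJ
  · simpa [h0] using hcd
  rw [countIn_eq_card_filter, gt_iff_lt, card_pos] at hJ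
  obtain ⟨p, hp, hp_min⟩ := (filter (fun k => y k ∈ Set.Ico c d) (Icc 1 m)).exists_min_image id hJ
  obtain ⟨q, hq, hq_max⟩ := (filter (fun k => y k ∈ Set.Ico c d) (Icc 1 m)).exists_max_image id hJ
  simp only [mem_filter, mem_Icc, Set.mem_Ico, id] at hp hq hp_min hq_max
  have hpq : p ≤ q := hq_max p hp
  have hcount : countIn m y (Set.Ico c d) - 1 ≤ q - p := by
    have : countIn m y (Set.Ico c d) ≤ #(Icc p q) := countIn_le fun k hk hkI =>
      mem_Icc.2 ⟨hp_min k ⟨mem_Icc.1 hk, hkI⟩, hq_max k ⟨mem_Icc.1 hk, hkI⟩⟩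
    rw [Nat.card_Icc] at this
    omega
  calc ((countIn m y (Set.Ico c d) - 1 : ℕ) : ℝ) * g ≤ (q - p : ℕ) * g := by
        gcongr
    _ ≤ y q - y p := card_mul_le_sub_of_le hpq fun k hk => by
      rw [mem_Ico] at hk
      refine h k (by omega) (by omega) ?_ ?_
      · exact hp.2.1.trans (hy ⟨hp.1.1, hp.1.2⟩ ⟨by omega, by omega⟩ hk.1)
      · exact (hy ⟨by omega, by omega⟩ ⟨hq.1.1, hq.1.2⟩ hk.2).trans_lt hq.2.2
    _ ≤ d - c := by linarith

theorem StepsLe.mono {e f c d e' f' c' d' : ℝ} (h : StepsLe m y e' f' c' d') (he : e' ≤ e)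
    (hf : f ≤ f') (hc : c' ≤ c) (hd : d ≤ d') : StepsLe m y e f c d :=
  fun k k' hk hkm hk' hkm' hkf hek hck hkd => h k k' hk hkm hk' hkm'
    (hkf.trans_le hf) (he.trans hek) (hc.trans hck) (hkd.trans_le hd)

theorem stepsLe_of_monotoneOn (hy : MonotoneOn y (Set.Icc 1 m))
    (hΔ : MonotoneOn (fun k => y (k + 1) - y k) (Set.Icc 1 (m - 1))) {e f c d : ℝ}
    (hfc : f ≤ c) : StepsLe m y e f c d := by
  intro k k' hk hkm hk' hkm' hkf _ hck _
  have hlt : k < k' := hy.reflect_lt ⟨hk, by omega⟩ ⟨hk', by omega⟩ (by linarith)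
  exact hΔ ⟨hk, by omega⟩ ⟨hk', by omega⟩ hlt.le

theorem stepsLe_of_antitoneOn (hy : MonotoneOn y (Set.Icc 1 m))
    (hΔ : AntitoneOn (fun k => y (k + 1) - y k) (Set.Icc 1 (m - 1))) {e f c d : ℝ}
    (hde : d ≤ e) : StepsLe m y e f c d := by
  intro k k' hk hkm hk' hkm' _ hek _ hkd
  have hlt : k' + 1 < k + 1 := hy.reflect_lt ⟨by omega, hkm'⟩ ⟨by omega, hkm⟩ (by linarith)
  exact hΔ ⟨hk', by omega⟩ ⟨hk, by omega⟩ (by omega)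

theorem mul_countIn_le (hy : MonotoneOn y (Set.Icc 1 m)) (hm1 : 1 ≤ m) {e f c d : ℝ}
    (hef : e ≤ f) (hcd : c ≤ d) (h1 : y 1 < e) (hm : f ≤ y m) (hst : StepsLe m y e f c d) :
    (f - e) * countIn m y (Set.Ico c d) ≤ (d - c) * (countIn m y (Set.Ico e f) + 1) + (f - e) := by
  obtain ⟨k, hk, hkm, hkf, hek, hcross⟩ := exists_step_sub_le hy hm1 hef h1 hm
  have hg : 0 ≤ y (k + 1) - y k := sub_nonneg.2 (hy ⟨hk, by omega⟩ ⟨by omega, hkm⟩ (by omega))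
  have hJ := countIn_sub_one_mul_le hy hcd hg fun k' hk' hkm' hck hkd =>
    hst k k' hk hkm hk' hkm' hkf hek hck hkd
  set nI := countIn m y (Set.Ico e f)
  set nJ := countIn m y (Set.Ico c d)
  have hnJ : (nJ : ℝ) ≤ (nJ - 1 : ℕ) + 1 := by norm_cast; omega
  calc (f - e) * nJ ≤ (f - e) * (nJ - 1 : ℕ) + (f - e) := by nlinarith
    _ ≤ (nI + 1) * (y (k + 1) - y k) * (nJ - 1 : ℕ) + (f - e) := by gcongr
    _ = (nI + 1) * ((nJ - 1 : ℕ) * (y (k + 1) - y k)) + (f - e) := by ring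
    _ ≤ (nI + 1) * (d - c) + (f - e) := by gcongr
    _ = (d - c) * (nI + 1) + (f - e) := by ring

theorem mul_countIn_window_le (hy : MonotoneOn y (Set.Icc 1 m)) (hm1 : 1 ≤ m) {i j : ℤ}
    (hi : y 1 < i) (him : i + 1 ≤ y m) (hst : StepsLe m y i (i + 1) j (j + 1))
    {α β γ δ : ℝ} (hα : 0 ≤ α) (hαβ : α ≤ β) (hβ : β ≤ 1) (hγ : 0 ≤ γ) (hγδ : γ ≤ δ)
    (hδ : δ ≤ 1) :
    (β - α) * countIn m y (Set.Ico (j + γ) (j + δ)) ≤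
      (δ - γ) * countIn m y (Set.Ico (i + α) (i + β)) + 2 := by
  have := mul_countIn_le hy hm1 (by linarith) (by linarith) (by linarith) (by linarith)
    (hst.mono (e := i + α) (f := i + β) (c := j + γ) (d := j + δ) (by linarith) (by linarith)
      (by linarith) (by linarith))
  simp only [add_sub_add_left_eq_sub] at this
  linarith

theorem exists_shift_stepsLe (hy : MonotoneOn y (Set.Icc 1 m))
    (hΔ : MonotoneOn (fun k => y (k + 1) - y k) (Set.Icc 1 (m - 1)) ∨
      AntitoneOn (fun k => y (k + 1) - y k) (Set.Icc 1 (m - 1))) :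
    ∃ t : ℤ, |t| ≤ 1 ∧ ∀ j : ℤ, StepsLe m y ↑(j + t) (↑(j + t) + 1) (j : ℝ) (j + 1) := by
  rcases hΔ with hΔ | hΔ
  · exact ⟨-1, by norm_num, fun j => stepsLe_of_monotoneOn hy hΔ (by push_cast; linarith)⟩
  · exact ⟨1, by norm_num, fun j => stepsLe_of_antitoneOn hy hΔ (by push_cast; linarith)⟩

theorem abs_countIn_fract_sub_le (hy : MonotoneOn y (Set.Icc 1 m)) (hm1 : 1 ≤ m) {t : ℤ}
    (ht : |t| ≤ 1) (hst : ∀ j : ℤ, StepsLe m y ↑(j + t) (↑(j + t) + 1) (j : ℝ) (j + 1)) {M : ℕ}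
    (hM : ∀ j : ℤ, countIn m y (Set.Ico (j : ℝ) (j + 1)) ≤ M) {a b : ℝ} (ha : 0 ≤ a) (hab : a ≤ b)
    (hb : b ≤ 1) :
    |(countIn m (fun k => Int.fract (y k)) (Set.Ico a b) : ℝ) - (b - a) * m| ≤
      2 * (y m - y 1 + M) := by
  set S := Icc ⌊y 1⌋ ⌊y m⌋
  -- the blocks whose partner block `j + t` lies strictly between the blocks of `y 1` and `y m`
  set G := Ioo (⌊y 1⌋ - t) (⌊y m⌋ - t)
  set A : ℤ → ℝ := fun j => countIn m y (Set.Ico (j + a) (j + b))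
  set n : ℤ → ℝ := fun j => countIn m y (Set.Ico (j : ℝ) (j + 1))
  have ht' := abs_le.1 ht
  have hA : (countIn m (fun k => Int.fract (y k)) (Set.Ico a b) : ℝ) = ∑ j ∈ S, A j := by
    rw [countIn_fract_eq_sum (fun k => floor_mem_Icc_of_monotoneOn hy) ha hb]
    push_cast
    rfl
  have hn : (b - a) * m = ∑ j ∈ S, (b - a) * n j := by
    rw [← mul_sum, ← sum_countIn_Ico_floor hy]
    push_cast
    rfl
  have hσ : Set.MapsTo (· + t) G S := fun j hj => by
    rw [mem_coe, mem_Ioo] at hj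
    exact mem_Icc.2 (by dsimp only; omega)
  have hcross : ∀ j ∈ G, y 1 < ↑(j + t) ∧ ↑(j + t) + 1 ≤ y m := fun j hj =>
    Int.lt_and_add_one_le_of_mem_Ioo_floor (by rw [mem_Ioo] at hj ⊢; omega)
  have hbad (j : ℤ) : A j ≤ M ∧ (b - a) * n j ≤ M := by
    have hAn : A j ≤ n j :=
      Nat.cast_le.2 <| countIn_mono (Set.Ico_subset_Ico (by linarith) (by linarith))
    have hnM : n j ≤ M := Nat.cast_le.2 (hM j)
    have hn0 : 0 ≤ n j := by positivity
    constructor <;> nlinarith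
  have hsum := abs_sum_sub_sum_le (u := A) (v := fun j => (b - a) * n j) (c := 2) (M := M)
    (Int.Ioo_sub_subset_Icc ht) (add_left_injective t).injOn hσ (fun j _ => by positivity)
    (fun j _ => by positivity)
    (fun j hj => by
      simpa [A, n] using mul_countIn_window_le hy hm1 (hcross j hj).1 (hcross j hj).2 (hst j)
        le_rfl zero_le_one le_rfl ha hab hb)
    (fun j hj => by
      simpa [A, n] using mul_countIn_window_le hy hm1 (hcross j hj).1 (hcross j hj).2 (hst j)
        ha hab hb le_rfl zero_le_one le_rfl)
    (fun j _ => (hbad j).1) (fun j _ => (hbad j).2)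
  have hG : (#G : ℝ) ≤ y m - y 1 := by
    rw [show #G = #(Ioo ⌊y 1⌋ ⌊y m⌋) by simp only [G, Int.card_Ioo]; congr 1; ring]
    exact Int.card_Ioo_floor_le (hy ⟨le_rfl, hm1⟩ ⟨hm1, le_rfl⟩ hm1)
  have hSG : (#(S \ G) : ℝ) * M ≤ 2 * M := by
    gcongr
    exact_mod_cast Int.card_Icc_sdiff_Ioo_sub_le ht
  rw [hA, hn]
  linarith

theorem abs_countIn_fract_div_sub_le_of_monotoneOn (hy : MonotoneOn y (Set.Icc 1 m))
    (hΔ : MonotoneOn (fun k => y (k + 1) - y k) (Set.Icc 1 (m - 1)) ∨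
      AntitoneOn (fun k => y (k + 1) - y k) (Set.Icc 1 (m - 1)))
    (hm1 : 1 ≤ m) {B : ℝ} (hB0 : 0 ≤ B) (hB : ∀ k, 1 ≤ k → k + 1 ≤ m → |y (k + 1) - y k| ≤ B)
    {M : ℕ} (hM : ∀ j : ℤ, countIn m y (Set.Ico (j : ℝ) (j + 1)) ≤ M) {a b : ℝ} (ha : 0 ≤ a)
    (hab : a ≤ b) (hb : b ≤ 1) :
    |(countIn m (fun k => Int.fract (y k)) (Set.Ico a b) : ℝ) / m - (b - a)| ≤
      2 * (B + M / m) := by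
  obtain ⟨t, ht, hst⟩ := exists_shift_stepsLe hy hΔ
  have hbound := abs_countIn_fract_sub_le hy hm1 ht hst hM ha hab hb
  have hrange : y m - y 1 ≤ m * B := calc
    y m - y 1 ≤ (m - 1 : ℕ) * B := sub_le_card_mul_of_le hm1 fun k hk => by
      rw [mem_Ico] at hk
      exact (le_abs_self _).trans (hB k hk.1 (by omega))
    _ ≤ m * B := by gcongr; exact_mod_cast Nat.sub_le m 1
  have hm0 : (0 : ℝ) < m := by exact_mod_cast hm1
  rw [div_sub' hm0.ne', abs_div, abs_of_pos hm0, div_le_iff₀ hm0]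
  calc _ ≤ 2 * (y m - y 1 + M) := by simpa [mul_comm] using hbound
    _ ≤ 2 * (m * B + M) := by gcongr
    _ = 2 * (B + M / m) * m := by field_simp

theorem AntitoneOn.monotoneOn_reflect (hy : AntitoneOn y (Set.Icc 1 m)) :
    MonotoneOn (fun k => y (m + 1 - k)) (Set.Icc 1 m) := by
  rintro k ⟨hk, hkm⟩ k' ⟨hk', hkm'⟩ hkk'
  exact hy ⟨by omega, by omega⟩ ⟨by omega, by omega⟩ (by omega)

theorem reflect_step {k : ℕ} (hkm : k ≤ m) :
    y (m + 1 - (k + 1)) - y (m + 1 - k) = -(y (m - k + 1) - y (m - k)) := by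
  rw [show m + 1 - (k + 1) = m - k by omega, show m + 1 - k = m - k + 1 by omega]
  ring

theorem monotoneOn_or_antitoneOn_steps_reflect
    (hΔ : MonotoneOn (fun k => y (k + 1) - y k) (Set.Icc 1 (m - 1)) ∨
      AntitoneOn (fun k => y (k + 1) - y k) (Set.Icc 1 (m - 1))) :
    MonotoneOn (fun k => y (m + 1 - (k + 1)) - y (m + 1 - k)) (Set.Icc 1 (m - 1)) ∨
      AntitoneOn (fun k => y (m + 1 - (k + 1)) - y (m + 1 - k)) (Set.Icc 1 (m - 1)) := by
  refine hΔ.imp ?_ ?_ <;> rintro h k ⟨hk, hkm⟩ k' ⟨hk', hkm'⟩ hkk' <;>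
    have := h (a := m - k') (b := m - k) ⟨by omega, by omega⟩ ⟨by omega, by omega⟩ (by omega) <;>
    simp only [reflect_step (by omega : k ≤ m), reflect_step (by omega : k' ≤ m)] <;>
    linarith

theorem abs_countIn_fract_div_sub_le
    (hy : MonotoneOn y (Set.Icc 1 m) ∨ AntitoneOn y (Set.Icc 1 m))
    (hΔ : MonotoneOn (fun k => y (k + 1) - y k) (Set.Icc 1 (m - 1)) ∨
      AntitoneOn (fun k => y (k + 1) - y k) (Set.Icc 1 (m - 1)))
    (hm1 : 1 ≤ m) {B : ℝ} (hB0 : 0 ≤ B) (hB : ∀ k, 1 ≤ k → k + 1 ≤ m → |y (k + 1) - y k| ≤ B)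
    {M : ℕ} (hM : ∀ j : ℤ, countIn m y (Set.Ico (j : ℝ) (j + 1)) ≤ M) {a b : ℝ} (ha : 0 ≤ a)
    (hab : a ≤ b) (hb : b ≤ 1) :
    |(countIn m (fun k => Int.fract (y k)) (Set.Ico a b) : ℝ) / m - (b - a)| ≤
      2 * (B + M / m) := by
  rcases hy with hy | hy
  · exact abs_countIn_fract_div_sub_le_of_monotoneOn hy hΔ hm1 hB0 hB hM ha hab hb
  rw [← countIn_reflect]
  refine abs_countIn_fract_div_sub_le_of_monotoneOn hy.monotoneOn_reflect
    (monotoneOn_or_antitoneOn_steps_reflect hΔ) hm1 hB0 (fun k hk hkm => ?_)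
    (fun j => countIn_reflect.trans_le (hM j)) ha hab hb
  rw [reflect_step (by omega), abs_neg]
  exact hB _ (by omega) (by omega)

end

theorem disc_le_of_max_diff_general (m : ℕ) (y : ℕ → ℝ) (M : ℕ) (B : ℝ)
    (hy : MonotoneOn y (Set.Icc 1 m) ∨ AntitoneOn y (Set.Icc 1 m))
    (hΔ : MonotoneOn (fun k => y (k + 1) - y k) (Set.Icc 1 (m - 1)) ∨
          AntitoneOn (fun k => y (k + 1) - y k) (Set.Icc 1 (m - 1)))
    (hB : IsGreatest {r : ℝ | ∃ k : ℕ, 1 ≤ k ∧ k + 1 ≤ m ∧ r = |y (k + 1) - y k|} B)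
    (hM : ∀ j : ℤ, ((Finset.Icc 1 m).filter fun k =>
            y k ∈ Set.Ico (j : ℝ) (j + 1)).card ≤ M) :
    disc (Finset.Icc 1 m) y ≤ 2 * (B + (M : ℝ) / m) := by
  obtain ⟨⟨k₀, hk₀, hk₀m, hB₀⟩, hB⟩ := hB
  have hm1 : 1 ≤ m := by omega
  have : Nonempty {p : ℝ × ℝ // 0 ≤ p.1 ∧ p.1 < p.2 ∧ p.2 ≤ 1} := ⟨⟨(0, 1), by norm_num⟩⟩
  refine ciSup_le fun ⟨(a, b), ha, hab, hb⟩ => ?_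
  rw [Nat.card_Icc, add_tsub_cancel_right, ← countIn_eq_card_filter]
  exact abs_countIn_fract_div_sub_le hy hΔ hm1 (hB₀ ▸ abs_nonneg _)
    (fun k hk hkm => hB ⟨k, hk, hkm, rfl⟩) (fun j => countIn_eq_card_filter.trans_le (hM j))
    ha hab.le hb

/-- Remark after Lemma 5: discrepancy bound via the maximal first difference
and the maximal number of points in a unit interval. -/
theorem disc_le_of_max_diff (m : ℕ) (y : ℕ → ℝ) (M : ℕ) (B : ℝ) (hm : 2 ≤ m)
    (hy : MonotoneOn y (Set.Icc 1 m) ∨ AntitoneOn y (Set.Icc 1 m))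
    (hΔ : MonotoneOn (fun k => y (k + 1) - y k) (Set.Icc 1 (m - 1)) ∨
          AntitoneOn (fun k => y (k + 1) - y k) (Set.Icc 1 (m - 1)))
    (hB : IsGreatest {r : ℝ | ∃ k : ℕ, 1 ≤ k ∧ k + 1 ≤ m ∧ r = |y (k + 1) - y k|} B)
    (hM : ∀ j : ℤ, ((Finset.Icc 1 m).filter fun k =>
            y k ∈ Set.Ico (j : ℝ) (j + 1)).card ≤ M)
    (hM' : ∃ j : ℤ, ((Finset.Icc 1 m).filter fun k =>
            y k ∈ Set.Ico (j : ℝ) (j + 1)).card = M) :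
    disc (Finset.Icc 1 m) y ≤ 2 * (B + (M : ℝ) / m) :=
  disc_le_of_max_diff_general m y M B hy hΔ hB hM
end

section
/- There is an absolute constant $C > 0$ such that the following holds. Let $Y = \{y_1, \ldots, y_m\}$, $m \ge 3$, be an increasing real sequence such that $\Delta^2 y_k > 0$ is weakly-decreasing with constant $K \ge 1$ (i.e., $\Delta^2 y_j \le K \Delta^2 y_n$ whenever $j > n$) and $\Delta y_k > 0$. Then the discrepancy satisfies $D(Y) \le C\left(\frac{y_m - y_1}{m} + \frac{K}{\sqrt{y_m - y_1}}\right)$ (assuming $y_m > y_1$). -/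
/-!
Write `a = y m - y 1` and `G = √a / (K m)`. From the first index `t` with `Δ y t ≥ G` on, the
gaps are nondecreasing and at least `G`. Cut the values into the unit blocks `[n, n + 1)`: inside
a block the gaps lie between the gaps where the sequence enters and leaves it, so the number of
points in `[n + α, n + β)` differs from `(β - α)` times the number in the block by at most `2`
plus the drop of the local density `1 / gap` across the block, and these drops telescope to at
most `1 / G`. Before `t` all gaps are below `G`, so some `Δ² y` there is at most `G / (t - 2)`;
by weak decrease every later `Δ² y` is at most `K G / (t - 2)`, which bounds all gaps and,
summed, gives `t - 2 ≲ m / √a`. Together, `m · D(Y) ≲ a + K m / √a`.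
-/

open Finset fwdDiff

lemma fwdDiff_fwdDiff_one_apply (y : ℕ → ℝ) (k : ℕ) :
    Δ_[1] (Δ_[1] y) k = y (k + 2) - 2 * y (k + 1) + y k := by
  simp only [fwdDiff]
  ring_nf

section Spread

variable {y : ℕ → ℝ} {c : ℝ} {i j : ℕ}

lemma sub_le_mul_of_fwdDiff_le (hij : i ≤ j) (h : ∀ k, i ≤ k → k < j → Δ_[1] y k ≤ c) :
    y j - y i ≤ (j - i) * c := by
  induction j, hij using Nat.le_induction with
  | base => simp
  | succ j hij ih =>
    have hj : y (j + 1) - y j ≤ c := h j hij j.lt_succ_self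
    have := ih fun k hik hkj => h k hik (by omega)
    push_cast
    linarith

lemma mul_le_sub_of_le_fwdDiff (hij : i ≤ j) (h : ∀ k, i ≤ k → k < j → c ≤ Δ_[1] y k) :
    (j - i) * c ≤ y j - y i := by
  have := sub_le_mul_of_fwdDiff_le (y := -y) (c := -c) hij fun k hik hkj => by
    simp only [fwdDiff, Pi.neg_apply]
    linarith [show c ≤ y (k + 1) - y k from h k hik hkj]
  simp only [Pi.neg_apply] at this
  linarith

lemma le_of_fwdDiff_nonneg (hij : i ≤ j) (h : ∀ k, i ≤ k → k < j → 0 ≤ Δ_[1] y k) :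
    y i ≤ y j := by
  linarith [mul_le_sub_of_le_fwdDiff hij h]

lemma monotoneOn_Icc_of_fwdDiff_nonneg {p q : ℕ} (h : ∀ k, p ≤ k → k < q → 0 ≤ Δ_[1] y k) :
    MonotoneOn y (Set.Icc p q) := fun _ hi _ hj hij =>
  le_of_fwdDiff_nonneg hij fun k hik hkj => h k (hi.1.trans hik) (hkj.trans_le hj.2)

end Spread

lemma Int.sum_Ico_sub' (f : ℤ → ℝ) {a b : ℤ} (hab : a ≤ b) :
    ∑ n ∈ Ico a b, (f n - f (n + 1)) = f a - f b := by
  induction b, hab using Int.leInduction with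
  | base => simp
  | succ b hab ih =>
    rw [← insert_Ico_right_eq_Ico_add_one hab, sum_insert (by simp), ih]
    ring

lemma card_filter_fract_mem_Ico_eq_sum {ι : Type*} (s : Finset ι) (y : ι → ℝ) (t : Finset ℤ)
    (hst : ∀ k ∈ s, ⌊y k⌋ ∈ t) {α β : ℝ} (hα : 0 ≤ α) (hβ : β ≤ 1) :
    #{k ∈ s | Int.fract (y k) ∈ Set.Ico α β} =
      ∑ n ∈ t, #{k ∈ s | y k ∈ Set.Ico (n + α) (n + β)} := by
  rw [card_eq_sum_card_fiberwise fun k hk => hst k (mem_filter.mp hk).1]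
  refine sum_congr rfl fun n _ => congrArg card ?_
  rw [filter_filter]
  refine filter_congr fun k _ => ?_
  rw [Set.mem_Ico, Set.mem_Ico, Int.fract]
  constructor
  · rintro ⟨⟨h1, h2⟩, rfl⟩
    constructor <;> linarith
  · rintro ⟨h1, h2⟩
    obtain rfl : ⌊y k⌋ = n := Int.floor_eq_iff.mpr ⟨by linarith, by linarith⟩
    exact ⟨⟨by linarith, by linarith⟩, rfl⟩

lemma card_eq_sum_card_filter_mem_Ico {ι : Type*} (s : Finset ι) (y : ι → ℝ) (t : Finset ℤ)
    (hst : ∀ k ∈ s, ⌊y k⌋ ∈ t) : #s = ∑ n ∈ t, #{k ∈ s | y k ∈ Set.Ico (n : ℝ) (n + 1)} := by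
  have := card_filter_fract_mem_Ico_eq_sum s y t hst le_rfl le_rfl
  rwa [filter_true_of_mem fun k _ => ⟨Int.fract_nonneg _, Int.fract_lt_one _⟩,
    sum_congr rfl fun n _ => by rw [add_zero]] at this

lemma abs_card_filter_sub_mul_card_le {ι : Type*} (s : Finset ι) (P : ι → Prop) [DecidablePred P]
    {ℓ : ℝ} (hℓ₀ : 0 ≤ ℓ) (hℓ₁ : ℓ ≤ 1) : |(#{k ∈ s | P k} : ℝ) - ℓ * #s| ≤ #s := by
  have hle : (#{k ∈ s | P k} : ℝ) ≤ #s := Nat.cast_le.mpr (card_filter_le s P)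
  rw [abs_le]
  constructor <;> nlinarith [Nat.cast_nonneg (α := ℝ) #{k ∈ s | P k}, Nat.cast_nonneg (α := ℝ) #s]

lemma card_Icc_floor_floor_le {a b : ℝ} (hab : a ≤ b) : (#(Icc ⌊a⌋ ⌊b⌋) : ℝ) ≤ b - a + 2 := by
  rw [Int.card_Icc, ← Int.cast_natCast, Int.toNat_of_nonneg (by linarith [Int.floor_mono hab])]
  push_cast
  linarith [Int.floor_le b, Int.lt_floor_add_one a]

lemma card_filter_mem_Ico_le {y : ℕ → ℝ} {p q : ℕ} {c u v : ℝ} (hc : 0 < c) (huv : u ≤ v)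
    (h : ∀ k, p ≤ k → k < q → c ≤ Δ_[1] y k) :
    (#{k ∈ Icc p q | y k ∈ Set.Ico u v} : ℝ) ≤ (v - u) / c + 1 := by
  set S := {k ∈ Icc p q | y k ∈ Set.Ico u v}
  rcases S.eq_empty_or_nonempty with hS | hS
  · rw [hS, card_empty, Nat.cast_zero]
    positivity
  have hmin := mem_filter.mp (S.min'_mem hS)
  have hmax := mem_filter.mp (S.max'_mem hS)
  have hle : S.min' hS ≤ S.max' hS := S.min'_le _ (S.max'_mem hS)
  have hcard : #S ≤ S.max' hS - S.min' hS + 1 := by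
    have := card_le_card (t := Icc (S.min' hS) (S.max' hS)) fun k hk =>
      mem_Icc.mpr ⟨S.min'_le k hk, S.le_max' k hk⟩
    rw [Nat.card_Icc] at this
    omega
  have hspread := mul_le_sub_of_le_fwdDiff hle fun k hk hk' =>
    h k ((mem_Icc.mp hmin.1).1.trans hk) (hk'.trans_le (mem_Icc.mp hmax.1).2)
  have : ((S.max' hS : ℝ) - S.min' hS) < (v - u) / c := by
    rw [lt_div_iff₀ hc]
    linarith [hmin.2.1, hmax.2.2]
  calc (#S : ℝ) ≤ ((S.max' hS - S.min' hS + 1 : ℕ) : ℝ) := by exact_mod_cast hcard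
    _ = S.max' hS - S.min' hS + 1 := by push_cast [hle]; ring
    _ ≤ (v - u) / c + 1 := by linarith

noncomputable def crossIdx (y : ℕ → ℝ) (p : ℕ) (x : ℝ) : ℕ := sInf {k | p ≤ k ∧ x ≤ y k}

/-- For `y p < x ≤ y q` and `κ = crossIdx y p x`, the length of the cell `(y (κ - 1), y κ]`
containing `x`. -/
noncomputable def crossGap (y : ℕ → ℝ) (p : ℕ) (x : ℝ) : ℝ := Δ_[1] y (crossIdx y p x - 1)

section Crossing

variable {y : ℕ → ℝ} {p q : ℕ} {x x' : ℝ}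

lemma crossIdx_le {k : ℕ} (hk : p ≤ k) (hx : x ≤ y k) : crossIdx y p x ≤ k :=
  Nat.sInf_le ⟨hk, hx⟩

lemma crossIdx_spec (hpq : p ≤ q) (hx : x ≤ y q) :
    p ≤ crossIdx y p x ∧ crossIdx y p x ≤ q ∧ x ≤ y (crossIdx y p x) :=
  have h := Nat.sInf_mem (s := {k | p ≤ k ∧ x ≤ y k}) ⟨q, hpq, hx⟩
  ⟨h.1, crossIdx_le hpq hx, h.2⟩

lemma lt_of_lt_crossIdx {k : ℕ} (hk : p ≤ k) (hkx : k < crossIdx y p x) : y k < x :=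
  not_le.mp fun hx => Nat.notMem_of_lt_sInf hkx ⟨hk, hx⟩

lemma lt_crossIdx (hpq : p ≤ q) (hp : y p < x) (hx : x ≤ y q) : p < crossIdx y p x := by
  obtain ⟨h₁, -, h₃⟩ := crossIdx_spec hpq hx
  refine h₁.lt_of_ne fun h => ?_
  rw [← h] at h₃
  linarith

lemma crossIdx_mono (hpq : p ≤ q) (hxx' : x ≤ x') (hx' : x' ≤ y q) :
    crossIdx y p x ≤ crossIdx y p x' :=
  have h := crossIdx_spec hpq hx'
  crossIdx_le h.1 (hxx'.trans h.2.2)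

end Crossing

section Tail

variable {y : ℕ → ℝ} {p q : ℕ} {G u v : ℝ}

lemma le_crossGap (hgap : ∀ k, p ≤ k → k < q → G ≤ Δ_[1] y k) (hpq : p ≤ q) (hp : y p < u)
    (hu : u ≤ y q) : G ≤ crossGap y p u := by
  have := lt_crossIdx hpq hp hu
  exact hgap _ (by omega) (by have := (crossIdx_spec hpq hu).2.1; omega)

lemma crossGap_mono (hmono : MonotoneOn (Δ_[1] y) (Set.Ico p q)) (hpq : p ≤ q) (hp : y p < u)
    (huv : u ≤ v) (hv : v ≤ y q) : crossGap y p u ≤ crossGap y p v := by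
  have hu := lt_crossIdx hpq hp (huv.trans hv)
  have hv' := (crossIdx_spec hpq hv).2.1
  have := crossIdx_mono hpq huv hv
  exact hmono ⟨by omega, by omega⟩ ⟨by omega, by omega⟩ (by omega)

lemma card_filter_mem_Ico_le_crossGap (hmono : MonotoneOn (Δ_[1] y) (Set.Ico p q)) (hG : 0 < G)
    (hgap : ∀ k, p ≤ k → k < q → G ≤ Δ_[1] y k) (hpq : p ≤ q) (hp : y p < u) (hu : u ≤ y q)
    (huv : u ≤ v) :
    (#{k ∈ Icc p q | y k ∈ Set.Ico u v} : ℝ) ≤ (v - u) / crossGap y p u + 1 := by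
  set κ := crossIdx y p u
  have hpκ : p < κ := lt_crossIdx hpq hp hu
  have hκq : κ ≤ q := (crossIdx_spec hpq hu).2.1
  calc (#{k ∈ Icc p q | y k ∈ Set.Ico u v} : ℝ) ≤ #{k ∈ Icc (κ - 1) q | y k ∈ Set.Ico u v} := by
        refine Nat.cast_le.mpr (card_le_card fun k hk => ?_)
        obtain ⟨hk, hyk⟩ := mem_filter.mp hk
        have := crossIdx_le (mem_Icc.mp hk).1 hyk.1
        exact mem_filter.mpr ⟨mem_Icc.mpr ⟨by omega, (mem_Icc.mp hk).2⟩, hyk⟩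
    _ ≤ (v - u) / crossGap y p u + 1 :=
        card_filter_mem_Ico_le (hG.trans_le (le_crossGap hgap hpq hp hu)) huv
          fun k hk hkq => hmono ⟨by omega, by omega⟩ ⟨by omega, hkq⟩ hk

lemma sub_div_crossGap_sub_one_le_card (hmono : MonotoneOn (Δ_[1] y) (Set.Ico p q)) (hG : 0 < G)
    (hgap : ∀ k, p ≤ k → k < q → G ≤ Δ_[1] y k) (hpq : p ≤ q) (hp : y p < u) (huv : u ≤ v)
    (hv : v ≤ y q) :
    (v - u) / crossGap y p v - 1 ≤ #{k ∈ Icc p q | y k ∈ Set.Ico u v} := by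
  set a := crossIdx y p u
  set b := crossIdx y p v
  have hpa : p < a := lt_crossIdx hpq hp (huv.trans hv)
  have hua : u ≤ y a := (crossIdx_spec hpq (huv.trans hv)).2.2
  obtain ⟨-, hbq, hvb⟩ := crossIdx_spec hpq hv
  have hab : a ≤ b := crossIdx_mono hpq huv hv
  have hcard : ((b - a : ℕ) : ℝ) ≤ #{k ∈ Icc p q | y k ∈ Set.Ico u v} := by
    rw [← Nat.card_Ico]
    refine Nat.cast_le.mpr (card_le_card fun k hk => ?_)
    obtain ⟨hak, hkb⟩ := mem_Ico.mp hk
    refine mem_filter.mpr ⟨mem_Icc.mpr ⟨by omega, by omega⟩, ?_, lt_of_lt_crossIdx (by omega) hkb⟩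
    have hy := monotoneOn_Icc_of_fwdDiff_nonneg fun k hpk hkq => hG.le.trans (hgap k hpk hkq)
    exact hua.trans (hy ⟨hpa.le, by omega⟩ ⟨by omega, by omega⟩ hak)
  have hua' : y (a - 1) < u := lt_of_lt_crossIdx (p := p) (x := u) (by omega) (by omega)
  have hspread : y b - y (a - 1) ≤ ((b : ℝ) - (a - 1 : ℕ)) * crossGap y p v :=
    sub_le_mul_of_fwdDiff_le (by omega) fun k hk hkb =>
      hmono ⟨by omega, by omega⟩ (show b - 1 ∈ Set.Ico p q from ⟨by omega, by omega⟩) (by omega)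
  have hσ : 0 < crossGap y p v := hG.trans_le (le_crossGap hgap hpq (hp.trans_le huv) hv)
  push_cast [hab, show 1 ≤ a by omega] at hcard hspread
  rw [div_sub_one hσ.ne', div_le_iff₀ hσ]
  nlinarith

variable {α β : ℝ}

lemma abs_card_sub_mul_card_le (hG : 0 < G) (hgap : ∀ k, p ≤ k → k < q → G ≤ Δ_[1] y k)
    (hα : 0 ≤ α) (hαβ : α < β) (hβ : β ≤ 1) (x : ℝ) :
    |(#{k ∈ Icc p q | y k ∈ Set.Ico (x + α) (x + β)} : ℝ)
      - (β - α) * #{k ∈ Icc p q | y k ∈ Set.Ico x (x + 1)}| ≤ 1 / G + 1 := by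
  have hJ := card_filter_mem_Ico_le (u := x + α) (v := x + β) hG (by linarith) hgap
  have h1 := card_filter_mem_Ico_le (u := x) (v := x + 1) hG (by linarith) hgap
  rw [show x + β - (x + α) = β - α by ring] at hJ
  rw [show x + 1 - x = 1 by ring] at h1
  have hGα : (β - α) / G ≤ 1 / G := div_le_div_of_nonneg_right (by linarith) hG.le
  have hN1 : (β - α) * #{k ∈ Icc p q | y k ∈ Set.Ico x (x + 1)} ≤
      (#{k ∈ Icc p q | y k ∈ Set.Ico x (x + 1)} : ℝ) :=
    mul_le_of_le_one_left (Nat.cast_nonneg _) (by linarith)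
  rw [abs_le]
  constructor <;> nlinarith [Nat.cast_nonneg (α := ℝ) #{k ∈ Icc p q | y k ∈ Set.Ico x (x + 1)},
    Nat.cast_nonneg (α := ℝ) #{k ∈ Icc p q | y k ∈ Set.Ico (x + α) (x + β)}]

lemma abs_card_sub_mul_card_le_crossGap (hmono : MonotoneOn (Δ_[1] y) (Set.Ico p q))
    (hG : 0 < G) (hgap : ∀ k, p ≤ k → k < q → G ≤ Δ_[1] y k) (hpq : p ≤ q)
    (hα : 0 ≤ α) (hαβ : α < β) (hβ : β ≤ 1) {x : ℝ} (hpx : y p < x) (hxq : x + 1 ≤ y q) :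
    |(#{k ∈ Icc p q | y k ∈ Set.Ico (x + α) (x + β)} : ℝ)
      - (β - α) * #{k ∈ Icc p q | y k ∈ Set.Ico x (x + 1)}|
      ≤ 2 + (1 / crossGap y p x - 1 / crossGap y p (x + 1)) := by
  set NJ : ℝ := ((#{k ∈ Icc p q | y k ∈ Set.Ico (x + α) (x + β)} : ℕ) : ℝ)
  set N1 : ℝ := ((#{k ∈ Icc p q | y k ∈ Set.Ico x (x + 1)} : ℕ) : ℝ)
  have hσ : ∀ u, y p < u → u ≤ y q → 0 < crossGap y p u := fun u hpu huq =>
    hG.trans_le (le_crossGap hgap hpq hpu huq)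
  have hσx := hσ x hpx (by linarith)
  have hσx1 := hσ (x + 1) (by linarith) hxq
  have hA : 1 / crossGap y p (x + α) ≤ 1 / crossGap y p x :=
    one_div_le_one_div_of_le hσx (crossGap_mono hmono hpq hpx (by linarith) (by linarith))
  have hB : 1 / crossGap y p (x + 1) ≤ 1 / crossGap y p (x + β) :=
    one_div_le_one_div_of_le (hσ _ (by linarith) (by linarith))
      (crossGap_mono hmono hpq (by linarith) (by linarith) hxq)
  have hAB : 1 / crossGap y p (x + 1) ≤ 1 / crossGap y p x :=
    one_div_le_one_div_of_le hσx (crossGap_mono hmono hpq hpx (by linarith) hxq)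
  have hJup : NJ ≤ (β - α) * (1 / crossGap y p (x + α)) + 1 := by
    have := card_filter_mem_Ico_le_crossGap (u := x + α) (v := x + β) hmono hG hgap hpq
      (by linarith) (by linarith) (by linarith)
    rwa [show x + β - (x + α) = β - α by ring, div_eq_mul_one_div] at this
  have hJlo : (β - α) * (1 / crossGap y p (x + β)) - 1 ≤ NJ := by
    have := sub_div_crossGap_sub_one_le_card (u := x + α) (v := x + β) hmono hG hgap hpq
      (by linarith) (by linarith) (by linarith)
    rwa [show x + β - (x + α) = β - α by ring, div_eq_mul_one_div] at this
  have h1up : N1 ≤ 1 / crossGap y p x + 1 := by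
    have := card_filter_mem_Ico_le_crossGap (u := x) (v := x + 1) hmono hG hgap hpq hpx
      (by linarith) (by linarith)
    rwa [show x + 1 - x = 1 by ring] at this
  have h1lo : 1 / crossGap y p (x + 1) - 1 ≤ N1 := by
    have := sub_div_crossGap_sub_one_le_card (u := x) (v := x + 1) hmono hG hgap hpq hpx
      (by linarith) hxq
    rwa [show x + 1 - x = 1 by ring] at this
  rw [abs_le]
  constructor <;> nlinarith

end Tail

noncomputable def crossDensity (y : ℕ → ℝ) (p q : ℕ) (x : ℝ) : ℝ :=
  if y p < x ∧ x ≤ y q then 1 / crossGap y p x else 0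

section TailCount

variable {y : ℕ → ℝ} {p q : ℕ} {G α β : ℝ}

lemma crossDensity_mem_Icc (hG : 0 < G) (hgap : ∀ k, p ≤ k → k < q → G ≤ Δ_[1] y k)
    (hpq : p ≤ q) (x : ℝ) : crossDensity y p q x ∈ Set.Icc 0 (1 / G) := by
  unfold crossDensity
  split_ifs with h
  · have := le_crossGap hgap hpq h.1 h.2
    exact ⟨by have := hG.trans_le this; positivity, one_div_le_one_div_of_le hG this⟩
  · exact ⟨le_rfl, by positivity⟩

lemma abs_card_sub_mul_card_le_of_mem_Icc (hmono : MonotoneOn (Δ_[1] y) (Set.Ico p q))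
    (hG : 0 < G) (hgap : ∀ k, p ≤ k → k < q → G ≤ Δ_[1] y k) (hpq : p ≤ q)
    (hα : 0 ≤ α) (hαβ : α < β) (hβ : β ≤ 1) {n : ℤ} (hn : n ∈ Icc ⌊y p⌋ ⌊y q⌋) :
    |(#{k ∈ Icc p q | y k ∈ Set.Ico (n + α) (n + β)} : ℝ)
      - (β - α) * #{k ∈ Icc p q | y k ∈ Set.Ico (n : ℝ) (n + 1)}|
      ≤ 2 + (if n = ⌊y p⌋ then 2 / G else 0) + (if n = ⌊y q⌋ then 2 / G else 0)
        + (crossDensity y p q n - crossDensity y p q (n + 1)) := by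
  have hρn := crossDensity_mem_Icc hG hgap hpq n
  have hρn1 := crossDensity_mem_Icc hG hgap hpq (n + 1)
  by_cases h : n = ⌊y p⌋ ∨ n = ⌊y q⌋
  · have h₁ : (0 : ℝ) ≤ if n = ⌊y p⌋ then 2 / G else 0 := by split_ifs <;> positivity
    have h₂ : (0 : ℝ) ≤ if n = ⌊y q⌋ then 2 / G else 0 := by split_ifs <;> positivity
    have h₃ : 2 / G ≤ (if n = ⌊y p⌋ then 2 / G else 0) + (if n = ⌊y q⌋ then 2 / G else 0) := by
      rcases h with rfl | rfl
      · rw [if_pos rfl]; linarith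
      · rw [if_pos rfl]; linarith
    linarith [abs_card_sub_mul_card_le (p := p) (q := q) hG hgap hα hαβ hβ n, hρn.1, hρn1.2,
      show 2 / G = 1 / G + 1 / G by ring]
  obtain ⟨hne₁, hne₂⟩ := not_or.mp h
  obtain ⟨hn₁, hn₂⟩ := mem_Icc.mp hn
  have hpn : y p < n := Int.floor_lt.mp (lt_of_le_of_ne hn₁ (Ne.symm hne₁))
  have hnq : (n : ℝ) + 1 ≤ y q := by
    exact_mod_cast Int.le_floor.mp (Int.add_one_le_of_lt (lt_of_le_of_ne hn₂ hne₂))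
  have hρ : crossDensity y p q n = 1 / crossGap y p n := if_pos ⟨hpn, by linarith⟩
  have hρ' : crossDensity y p q (n + 1) = 1 / crossGap y p (n + 1) := if_pos ⟨by linarith, hnq⟩
  rw [if_neg hne₁, if_neg hne₂, hρ, hρ']
  linarith [abs_card_sub_mul_card_le_crossGap hmono hG hgap hpq hα hαβ hβ hpn hnq]

theorem abs_card_fract_sub_le_of_le_fwdDiff (hmono : MonotoneOn (Δ_[1] y) (Set.Ico p q))
    (hG : 0 < G) (hgap : ∀ k, p ≤ k → k < q → G ≤ Δ_[1] y k) (hpq : p ≤ q)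
    (hα : 0 ≤ α) (hαβ : α < β) (hβ : β ≤ 1) :
    |(#{k ∈ Icc p q | Int.fract (y k) ∈ Set.Ico α β} : ℝ) - (β - α) * #(Icc p q)|
      ≤ 2 * (y q - y p) + 4 + 4 / G := by
  set n₁ := ⌊y p⌋
  set n₂ := ⌊y q⌋
  have hy := monotoneOn_Icc_of_fwdDiff_nonneg fun k hpk hkq => hG.le.trans (hgap k hpk hkq)
  have hfloor : ∀ k ∈ Icc p q, ⌊y k⌋ ∈ Icc n₁ n₂ := fun k hk => by
    have hk : k ∈ Set.Icc p q := by simpa using hk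
    exact mem_Icc.mpr ⟨Int.floor_mono (hy ⟨le_rfl, hpq⟩ hk hk.1),
      Int.floor_mono (hy hk ⟨hpq, le_rfl⟩ hk.2)⟩
  have hcount := card_filter_fract_mem_Ico_eq_sum (Icc p q) y (Icc n₁ n₂) hfloor hα hβ
  have htotal := card_eq_sum_card_filter_mem_Ico (Icc p q) y (Icc n₁ n₂) hfloor
  have hn₁₂ : n₁ ≤ n₂ := Int.floor_mono (hy ⟨le_rfl, hpq⟩ ⟨hpq, le_rfl⟩ hpq)
  have hρ₁ : crossDensity y p q n₁ = 0 := if_neg fun h => (Int.floor_le (y p)).not_gt h.1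
  have hρ₂ : crossDensity y p q ↑(n₂ + 1) = 0 := if_neg fun h => by
    push_cast at h
    linarith [h.2, Int.lt_floor_add_one (y q)]
  have hblocks := card_Icc_floor_floor_le (hy ⟨le_rfl, hpq⟩ ⟨hpq, le_rfl⟩ hpq)
  calc |(#{k ∈ Icc p q | Int.fract (y k) ∈ Set.Ico α β} : ℝ) - (β - α) * #(Icc p q)|
      = |∑ n ∈ Icc n₁ n₂, ((#{k ∈ Icc p q | y k ∈ Set.Ico (n + α) (n + β)} : ℝ)
          - (β - α) * #{k ∈ Icc p q | y k ∈ Set.Ico (n : ℝ) (n + 1)})| := by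
        rw [hcount, htotal]
        push_cast
        rw [mul_sum, sum_sub_distrib]
    _ ≤ ∑ n ∈ Icc n₁ n₂, (2 + (if n = n₁ then 2 / G else 0) + (if n = n₂ then 2 / G else 0)
          + (crossDensity y p q n - crossDensity y p q ↑(n + 1))) := by
        refine (abs_sum_le_sum_abs _ _).trans (sum_le_sum fun n hn => ?_)
        push_cast
        exact abs_card_sub_mul_card_le_of_mem_Icc hmono hG hgap hpq hα hαβ hβ hn
    _ = 2 * #(Icc n₁ n₂) + 2 / G + 2 / G := by
        rw [sum_add_distrib, sum_add_distrib, sum_add_distrib, sum_ite_eq', sum_ite_eq',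
          if_pos (left_mem_Icc.mpr hn₁₂), if_pos (right_mem_Icc.mpr hn₁₂),
          ← Ico_add_one_right_eq_Icc,
          Int.sum_Ico_sub' (fun n : ℤ => crossDensity y p q n) (by omega), hρ₁, hρ₂, sum_const,
          nsmul_eq_mul]
        ring
    _ ≤ 2 * (y q - y p) + 4 + 4 / G := by linarith [show 4 / G = 2 / G + 2 / G by ring]

end TailCount

lemma exists_first_le_fwdDiff {y : ℕ → ℝ} {m : ℕ} {G : ℝ} (hm : 1 ≤ m)
    (h : ((m : ℝ) - 1) * G < y m - y 1) :
    ∃ t, 1 ≤ t ∧ t < m ∧ G ≤ Δ_[1] y t ∧ ∀ k, 1 ≤ k → k < t → Δ_[1] y k < G := by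
  classical
  have hex : ∃ t, 1 ≤ t ∧ t < m ∧ G ≤ Δ_[1] y t := by
    by_contra! hlt
    have := sub_le_mul_of_fwdDiff_le hm fun k hk hkm => (hlt k hk hkm).le
    push_cast at this
    linarith
  refine ⟨Nat.find hex, (Nat.find_spec hex).1, (Nat.find_spec hex).2.1, (Nat.find_spec hex).2.2,
    fun k hk hkt => ?_⟩
  have := Nat.find_min hex hkt
  have hkm : k < m := hkt.trans (Nat.find_spec hex).2.1
  exact lt_of_not_ge fun h => this ⟨hk, hkm, h⟩

lemma mul_sub_le_of_fwdDiff_lt {y : ℕ → ℝ} {m r : ℕ} {K G : ℝ} (hK : 0 ≤ K) (hr : 0 < r)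
    (hrm : r + 2 ≤ m) (hpos : 0 ≤ Δ_[1] y 1)
    (hwd : ∀ n j, 1 ≤ n → n < j → j + 2 ≤ m →
      Δ_[1] (Δ_[1] y) j ≤ K * Δ_[1] (Δ_[1] y) n)
    (hsmall : ∀ k, 1 ≤ k → k ≤ r + 1 → Δ_[1] y k < G) :
    r * (y m - y 1) ≤ m * G * (r + m * K) := by
  have hr' : (0 : ℝ) < r := Nat.cast_pos.mpr hr
  have hG : 0 < G := hpos.trans_lt (hsmall 1 le_rfl (by omega))
  -- the `Δ² y k` with `1 ≤ k ≤ r` sum to `Δ y (r + 1) - Δ y 1 < G`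
  obtain ⟨n, hn1, hnr, hn⟩ : ∃ n, 1 ≤ n ∧ n ≤ r ∧ Δ_[1] (Δ_[1] y) n ≤ G / r := by
    by_contra! hlt
    have hspread := mul_le_sub_of_le_fwdDiff (y := Δ_[1] y) (i := 1) (j := r + 1) (by omega)
      fun k hk hkr => (hlt k hk (by omega)).le
    rw [Nat.cast_add_one, Nat.cast_one, add_sub_cancel_right, mul_div_cancel₀ _ hr'.ne'] at hspread
    linarith [hsmall (r + 1) (by omega) le_rfl]
  have hgap : ∀ k, 1 ≤ k → k < m → Δ_[1] y k ≤ G * (r + m * K) / r := by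
    intro k hk hkm
    rw [le_div_iff₀ hr']
    rcases le_or_gt k (r + 1) with hkr | hkr
    · nlinarith [mul_lt_mul_of_pos_right (hsmall k hk hkr) hr',
        mul_nonneg (mul_nonneg hG.le (Nat.cast_nonneg m)) hK]
    have hspread := sub_le_mul_of_fwdDiff_le (y := Δ_[1] y) (c := K * (G / r)) hkr.le
      fun j hj hjk => (hwd n j hn1 (by omega) (by omega)).trans (mul_le_mul_of_nonneg_left hn hK)
    have hkm' : (k : ℝ) - (r + 1 : ℕ) ≤ m := by
      have : (k : ℝ) ≤ m := by exact_mod_cast hkm.le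
      push_cast
      linarith
    have hKGr : r * (K * (G / r)) = K * G := by field_simp
    nlinarith [hsmall (r + 1) (by omega) le_rfl, mul_le_mul_of_nonneg_right hkm'
      (show 0 ≤ K * (G / r) by positivity)]
  have hsum := sub_le_mul_of_fwdDiff_le (by omega : 1 ≤ m) hgap
  rw [mul_div_assoc', le_div_iff₀ hr', Nat.cast_one] at hsum
  have : 0 ≤ G * (r + m * K) := by positivity
  nlinarith

lemma abs_card_fract_sub_le_of_monotoneOn_fwdDiff {y : ℕ → ℝ} {p t q : ℕ} {G α β : ℝ}
    (hmono : MonotoneOn (Δ_[1] y) (Set.Ico p q)) (hG : 0 < G) (hpt : p ≤ t) (htq : t ≤ q)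
    (hGt : G ≤ Δ_[1] y t) (hyt : y p ≤ y t) (hα : 0 ≤ α) (hαβ : α < β) (hβ : β ≤ 1) :
    |(#{k ∈ Icc p q | Int.fract (y k) ∈ Set.Ico α β} : ℝ) - (β - α) * #(Icc p q)|
      ≤ (t - p) + (2 * (y q - y p) + 4 + 4 / G) := by
  have htail := abs_card_fract_sub_le_of_le_fwdDiff (p := t) (q := q)
    (hmono.mono (Set.Ico_subset_Ico_left hpt)) hG
    (fun k htk hkq => hGt.trans (hmono ⟨hpt, by omega⟩ ⟨by omega, hkq⟩ htk)) htq hα hαβ hβ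
  have hhead := abs_card_filter_sub_mul_card_le (Ico p t) (fun k => Int.fract (y k) ∈ Set.Ico α β)
    (ℓ := β - α) (by linarith) (by linarith)
  have hsplit : Icc p q = Ico p t ∪ Icc t q := by
    rw [← Ico_add_one_right_eq_Icc, ← Ico_add_one_right_eq_Icc, Ico_union_Ico_eq_Ico hpt (by omega)]
  have hdisj : Disjoint (Ico p t) (Icc t q) := by
    rw [← Ico_add_one_right_eq_Icc]
    exact Ico_disjoint_Ico_consecutive p t (q + 1)
  rw [Nat.card_Ico, Nat.cast_sub hpt] at hhead
  rw [hsplit, filter_union, card_union_of_disjoint (disjoint_filter_filter hdisj),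
    card_union_of_disjoint hdisj, Nat.card_Ico, Nat.cast_add, Nat.cast_add, Nat.cast_sub hpt]
  calc _ ≤ |(#{k ∈ Ico p t | Int.fract (y k) ∈ Set.Ico α β} : ℝ) - (β - α) * (t - p)|
        + |(#{k ∈ Icc t q | Int.fract (y k) ∈ Set.Ico α β} : ℝ) - (β - α) * #(Icc t q)| :=
        (abs_add_le _ _).trans_eq' (by ring_nf)
    _ ≤ _ := add_le_add hhead (htail.trans (by linarith))

lemma sub_two_mul_sqrt_le {y : ℕ → ℝ} {m t : ℕ} {K : ℝ} (hK : 1 ≤ K) (htm : t < m)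
    (hpos : 0 ≤ Δ_[1] y 1)
    (hwd : ∀ n j, 1 ≤ n → n < j → j + 2 ≤ m →
      Δ_[1] (Δ_[1] y) j ≤ K * Δ_[1] (Δ_[1] y) n)
    (ha : 16 ≤ y m - y 1)
    (hsmall : ∀ k, 1 ≤ k → k < t → Δ_[1] y k < √(y m - y 1) / (K * m)) :
    ((t : ℝ) - 2) * √(y m - y 1) ≤ 2 * K * m := by
  set s := √(y m - y 1)
  have hs : 4 ≤ s := Real.le_sqrt_of_sq_le (by linarith)
  have hm : (0 : ℝ) < m := Nat.cast_pos.mpr (by omega)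
  rcases le_or_gt t 2 with ht | ht
  · have : (t : ℝ) ≤ 2 := by exact_mod_cast ht
    nlinarith
  have hspread := mul_sub_le_of_fwdDiff_lt (K := K) (r := t - 2) (by linarith) (by omega) (by omega)
    hpos hwd fun k hk hkr => hsmall k hk (by omega)
  have hss : y m - y 1 = s * s := (Real.mul_self_sqrt (by linarith)).symm
  have hmG : m * (s / (K * m)) = s / K := by field_simp
  push_cast [show 2 ≤ t by omega] at hspread ⊢
  set r : ℝ := (t : ℝ) - 2
  have hr : 0 < r := by simp only [r]; exact sub_pos.mpr (by exact_mod_cast ht)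
  rw [hss, hmG] at hspread
  have hsK : s / K * r ≤ s * r := mul_le_mul_of_nonneg_right (div_le_self (by linarith) hK) hr.le
  have hsK' : s / K * (m * K) = s * m := by field_simp
  have hrs : r * s ≤ r + m := by nlinarith
  nlinarith

lemma abs_card_fract_sub_le_of_sixteen_le {y : ℕ → ℝ} {m : ℕ} {K α β : ℝ} (hm : 1 ≤ m)
    (hK : 1 ≤ K) (hpos : ∀ k, 1 ≤ k → k < m → 0 < Δ_[1] y k)
    (hmono : MonotoneOn (Δ_[1] y) (Set.Ico 1 m))
    (hwd : ∀ n j, 1 ≤ n → n < j → j + 2 ≤ m →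
      Δ_[1] (Δ_[1] y) j ≤ K * Δ_[1] (Δ_[1] y) n)
    (ha : 16 ≤ y m - y 1) (hα : 0 ≤ α) (hαβ : α < β) (hβ : β ≤ 1) :
    |(#{k ∈ Icc 1 m | Int.fract (y k) ∈ Set.Ico α β} : ℝ) - (β - α) * m|
      ≤ 3 * (y m - y 1) + 6 * (K * m / √(y m - y 1)) := by
  set s := √(y m - y 1)
  have hs : 4 ≤ s := Real.le_sqrt_of_sq_le (by linarith)
  have hss : s * s = y m - y 1 := Real.mul_self_sqrt (by linarith)
  have hm0 : (0 : ℝ) < m := Nat.cast_pos.mpr hm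
  set G := s / (K * m)
  have hG : 0 < G := by positivity
  have hmG : m * G = s / K := by simp only [G]; field_simp
  have hsK : s / K ≤ s := div_le_self (by linarith) hK
  obtain ⟨t, ht1, htm, hGt, hsmall⟩ := exists_first_le_fwdDiff hm (G := G) (by nlinarith)
  have hyt : y 1 ≤ y t := le_of_fwdDiff_nonneg ht1 fun k hk hkt => (hpos k hk (by omega)).le
  have hsplit := abs_card_fract_sub_le_of_monotoneOn_fwdDiff hmono hG ht1 htm.le hGt hyt hα hαβ hβ
  rw [Nat.card_Icc, Nat.add_sub_cancel] at hsplit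
  have hhead : (t : ℝ) - 2 ≤ 2 * (K * m / s) := by
    rw [mul_div_assoc', le_div_iff₀ (by positivity)]
    linarith [sub_two_mul_sqrt_le hK htm (hpos 1 le_rfl (by omega)).le hwd ha hsmall]
  have h4G : 4 / G = 4 * (K * m / s) := by simp only [G]; field_simp
  push_cast at hsplit
  linarith

lemma disc_le_of_forall {s : Finset ℕ} {y : ℕ → ℝ} {c : ℝ}
    (h : ∀ α β : ℝ, 0 ≤ α → α < β → β ≤ 1 →
      |(#{k ∈ s | Int.fract (y k) ∈ Set.Ico α β} : ℝ) / #s - (β - α)| ≤ c) :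
    disc s y ≤ c := by
  have : Nonempty {p : ℝ × ℝ // 0 ≤ p.1 ∧ p.1 < p.2 ∧ p.2 ≤ 1} := ⟨⟨(0, 1), by norm_num⟩⟩
  exact ciSup_le fun ⟨⟨α, β⟩, hα, hαβ, hβ⟩ => h α β hα hαβ hβ

lemma abs_div_sub_le_of_abs_sub_mul_le {N ℓ c m : ℝ} (hm : 0 < m) (h : |N - ℓ * m| ≤ c * m) :
    |N / m - ℓ| ≤ c := by
  rwa [show N / m - ℓ = (N - ℓ * m) / m by field_simp, abs_div, abs_of_pos hm, div_le_iff₀ hm]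

lemma abs_card_fract_sub_le_of_lt_sixteen {y : ℕ → ℝ} {m : ℕ} {K α β : ℝ} (hK : 1 ≤ K)
    (ha₀ : 0 < y m - y 1) (ha : y m - y 1 < 16) (hα : 0 ≤ α) (hαβ : α < β) (hβ : β ≤ 1) :
    |(#{k ∈ Icc 1 m | Int.fract (y k) ∈ Set.Ico α β} : ℝ) - (β - α) * m|
      ≤ 3 * (y m - y 1) + 6 * (K * m / √(y m - y 1)) := by
  have hs₀ : 0 < √(y m - y 1) := Real.sqrt_pos.mpr ha₀
  have hs : √(y m - y 1) < 4 := by rw [Real.sqrt_lt' (by norm_num)]; linarith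
  have hm : (m : ℝ) ≤ 4 * (K * m / √(y m - y 1)) := by
    rw [mul_div_assoc', le_div_iff₀ hs₀]
    nlinarith [Nat.cast_nonneg (α := ℝ) m]
  have := abs_card_filter_sub_mul_card_le (Icc 1 m) (fun k => Int.fract (y k) ∈ Set.Ico α β)
    (ℓ := β - α) (by linarith) (by linarith)
  rw [Nat.card_Icc, Nat.add_sub_cancel] at this
  have : 0 ≤ K * m / √(y m - y 1) := by positivity
  linarith

/-- Lemma 6 (L1): discrepancy bound for an increasing sequence whose second
differences are positive and weakly-decreasing. -/
theorem disc_le_weakly_decreasing :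
    ∃ C : ℝ, 0 < C ∧ ∀ (m : ℕ) (y : ℕ → ℝ) (K : ℝ), 3 ≤ m → 1 ≤ K →
      (∀ k : ℕ, 1 ≤ k → k + 1 ≤ m → 0 < y (k + 1) - y k) →
      (∀ k : ℕ, 1 ≤ k → k + 2 ≤ m → 0 < y (k + 2) - 2 * y (k + 1) + y k) →
      (∀ n j : ℕ, 1 ≤ n → n < j → j + 2 ≤ m →
        y (j + 2) - 2 * y (j + 1) + y j ≤ K * (y (n + 2) - 2 * y (n + 1) + y n)) →
      y 1 < y m →
      disc (Finset.Icc 1 m) y ≤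
        C * ((y m - y 1) / m + K / Real.sqrt (y m - y 1)) := by
  refine ⟨6, by norm_num, fun m y K hm hK hgap hconv hwd hy =>
    disc_le_of_forall fun α β hα hαβ hβ => ?_⟩
  have hmono : MonotoneOn (Δ_[1] y) (Set.Ico 1 m) := fun i hi j hj hij =>
    le_of_fwdDiff_nonneg hij fun k hik hkj => by
      rw [fwdDiff_fwdDiff_one_apply]
      exact (hconv k (hi.1.trans hik) (by have := hj.2; omega)).le
  have hwd' : ∀ n j, 1 ≤ n → n < j → j + 2 ≤ m →
      Δ_[1] (Δ_[1] y) j ≤ K * Δ_[1] (Δ_[1] y) n := by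
    simpa only [fwdDiff_fwdDiff_one_apply] using hwd
  have hm₀ : (0 : ℝ) < m := Nat.cast_pos.mpr (by omega)
  rw [Nat.card_Icc, Nat.add_sub_cancel]
  refine abs_div_sub_le_of_abs_sub_mul_le hm₀
    (le_trans (b := 3 * (y m - y 1) + 6 * (K * m / √(y m - y 1))) ?_ ?_)
  · rcases lt_or_ge (y m - y 1) 16 with ha | ha
    · exact abs_card_fract_sub_le_of_lt_sixteen hK (by linarith) ha hα hαβ hβ
    · exact abs_card_fract_sub_le_of_sixteen_le (by omega) hK (fun k hk hkm => hgap k hk hkm)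
        hmono hwd' ha hα hαβ hβ
  · have hRHS : 6 * ((y m - y 1) / m + K / √(y m - y 1)) * m
        = 6 * (y m - y 1) + 6 * (K * m / √(y m - y 1)) := by field_simp
    linarith
end

section
/- Let $(x_k)$ be an infinite real sequence and $\varepsilon > 0$. Suppose there exists $n_0$ such that for every $n \ge n_0$ there is a positive integer $m \le n\varepsilon$ with $D\{x_k : n < k \le n+m\} \le \varepsilon$. Then $\limsup_{N \to \infty} D\{x_k : 1 \le k \le N\} \le 2\varepsilon$. -/
/-!
Fix an interval `[u, v)` and let `F N` be the number of `k ≤ N` with `{x k} ∈ [u, v)`, minus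
`N (v - u)`. Then `F 0 = 0`, `F` is `1`-Lipschitz, and the hypothesis says that from every
`n ≥ n₀` there is a block `(n, n + m]` with `m ≤ ε n` over which `F` moves by at most `ε m`.
Chaining such blocks from `n₀` reaches a block start `b ≤ N` with `N < b + m`, so
`|F N| ≤ n₀ + ε (b - n₀) + (N - b) ≤ n₀ + 2 ε N`, uniformly in `[u, v)`. Dividing by `N` gives
`disc {x k : 1 ≤ k ≤ N} ≤ n₀ / N + 2 ε`.
-/

open Finset Filter

section Blocks

variable {F : ℕ → ℝ} {ε : ℝ} {n₀ : ℕ}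

lemma exists_block_covering
    (hblock : ∀ n ≥ n₀, ∃ m : ℕ, 0 < m ∧ (m : ℝ) ≤ n * ε ∧ |F (n + m) - F n| ≤ m * ε)
    {N : ℕ} (hN : n₀ ≤ N) :
    ∃ b m : ℕ, n₀ ≤ b ∧ b ≤ N ∧ N < b + m ∧ (m : ℝ) ≤ b * ε ∧
      |F (b + m) - F b| ≤ m * ε ∧ |F b - F n₀| ≤ ε * (b - n₀) := by
  induction N, hN using Nat.le_induction with
  | base =>
    obtain ⟨m, hm, hmn, hFm⟩ := hblock n₀ le_rfl
    exact ⟨n₀, m, le_rfl, le_rfl, by omega, hmn, hFm, by simp⟩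
  | succ N hN ih =>
    obtain ⟨b, m, hb, hbN, hNm, hmb, hFm, hFb⟩ := ih
    by_cases hlt : N + 1 < b + m
    · exact ⟨b, m, hb, by omega, hlt, hmb, hFm, hFb⟩
    obtain ⟨m', hm', hm'n, hFm'⟩ := hblock (N + 1) (by omega)
    have hend : N + 1 = b + m := by omega
    refine ⟨N + 1, m', by omega, le_rfl, by omega, hm'n, hFm', ?_⟩
    rw [hend]
    calc |F (b + m) - F n₀| ≤ |F (b + m) - F b| + |F b - F n₀| := abs_sub_le _ _ _
      _ ≤ m * ε + ε * (b - n₀) := add_le_add hFm hFb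
      _ = ε * ((b + m : ℕ) - n₀) := by push_cast; ring

lemma abs_sub_le_two_mul_of_blocks (hF : ∀ a b, a ≤ b → |F b - F a| ≤ (b : ℝ) - a)
    (hblock : ∀ n ≥ n₀, ∃ m : ℕ, 0 < m ∧ (m : ℝ) ≤ n * ε ∧ |F (n + m) - F n| ≤ m * ε)
    {N : ℕ} (hN : n₀ ≤ N) :
    |F N - F n₀| ≤ 2 * ε * N := by
  obtain ⟨b, m, hb, hbN, hNm, hmb, -, hFb⟩ := exists_block_covering hblock hN
  have hbN' : (b : ℝ) ≤ N := by exact_mod_cast hbN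
  have hNm' : (N : ℝ) < b + m := by exact_mod_cast hNm
  have hn₀b : (n₀ : ℝ) ≤ b := by exact_mod_cast hb
  have hε : 0 ≤ ε := (pos_of_mul_pos_right (by linarith) (Nat.cast_nonneg b)).le
  calc |F N - F n₀| ≤ |F N - F b| + |F b - F n₀| := abs_sub_le _ _ _
    _ ≤ (N - b) + ε * (b - n₀) := add_le_add (hF b N hbN) hFb
    _ ≤ 2 * ε * N := by nlinarith [Nat.cast_nonneg (α := ℝ) n₀]

lemma abs_le_of_blocks (hF : ∀ a b, a ≤ b → |F b - F a| ≤ (b : ℝ) - a) (hF₀ : F 0 = 0)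
    (hblock : ∀ n ≥ n₀, ∃ m : ℕ, 0 < m ∧ (m : ℝ) ≤ n * ε ∧ |F (n + m) - F n| ≤ m * ε)
    {N : ℕ} (hN : n₀ ≤ N) :
    |F N| ≤ n₀ + 2 * ε * N := by
  calc |F N| ≤ |F N - F n₀| + |F n₀ - F 0| := by simpa [hF₀] using abs_sub_le (F N) (F n₀) 0
    _ ≤ 2 * ε * N + n₀ := by
      gcongr
      · exact abs_sub_le_two_mul_of_blocks hF hblock hN
      · simpa using hF 0 n₀ (Nat.zero_le _)
    _ = n₀ + 2 * ε * N := add_comm _ _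

end Blocks

open scoped Classical in
noncomputable def hits (s : Finset ℕ) (y : ℕ → ℝ) (u v : ℝ) : ℕ :=
  (s.filter fun k => Int.fract (y k) ∈ Set.Ico u v).card

section Discrepancy

variable (s : Finset ℕ) (y : ℕ → ℝ) {u v : ℝ}

lemma hits_le_card : hits s y u v ≤ s.card := card_filter_le _ _

lemma hits_union {t : Finset ℕ} (h : Disjoint s t) :
    hits (s ∪ t) y u v = hits s y u v + hits t y u v := by
  unfold hits
  rw [filter_union, card_union_of_disjoint (disjoint_filter_filter h)]

lemma disc_bddAbove :
    BddAbove (Set.range fun p : {p : ℝ × ℝ // 0 ≤ p.1 ∧ p.1 < p.2 ∧ p.2 ≤ 1} =>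
      |(hits s y p.1.1 p.1.2 : ℝ) / s.card - (p.1.2 - p.1.1)|) := by
  refine ⟨1, ?_⟩
  rintro r ⟨⟨⟨u, v⟩, hu, huv, hv⟩, rfl⟩
  refine abs_sub_le_of_nonneg_of_le (by positivity) ?_ (by simp only; linarith)
    (by simp only; linarith)
  exact div_le_one_of_le₀ (by exact_mod_cast hits_le_card s y) (Nat.cast_nonneg _)

lemma abs_hits_div_sub_le_disc (hu : 0 ≤ u) (huv : u < v) (hv : v ≤ 1) :
    |(hits s y u v : ℝ) / s.card - (v - u)| ≤ disc s y :=
  le_ciSup (disc_bddAbove s y) ⟨(u, v), hu, huv, hv⟩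

lemma disc_nonneg : 0 ≤ disc s y :=
  (abs_nonneg _).trans (abs_hits_div_sub_le_disc s y le_rfl one_pos le_rfl)

lemma disc_le {c : ℝ}
    (h : ∀ u v, 0 ≤ u → u < v → v ≤ 1 → |(hits s y u v : ℝ) / s.card - (v - u)| ≤ c) :
    disc s y ≤ c :=
  have : Nonempty {p : ℝ × ℝ // 0 ≤ p.1 ∧ p.1 < p.2 ∧ p.2 ≤ 1} :=
    ⟨⟨(0, 1), le_rfl, one_pos, le_rfl⟩⟩
  ciSup_le fun p => h _ _ p.2.1 p.2.2.1 p.2.2.2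

lemma abs_hits_sub_le_card_mul_disc (hu : 0 ≤ u) (huv : u < v) (hv : v ≤ 1) :
    |(hits s y u v : ℝ) - s.card * (v - u)| ≤ s.card * disc s y := by
  rcases s.eq_empty_or_nonempty with rfl | hs
  · simp [hits]
  have hpos : (0 : ℝ) < s.card := by exact_mod_cast hs.card_pos
  calc |(hits s y u v : ℝ) - s.card * (v - u)|
      = s.card * |(hits s y u v : ℝ) / s.card - (v - u)| := by
        rw [← abs_of_pos hpos, ← abs_mul, abs_of_pos hpos]
        field_simp
    _ ≤ s.card * disc s y :=
        mul_le_mul_of_nonneg_left (abs_hits_div_sub_le_disc s y hu huv hv) hpos.le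

end Discrepancy

noncomputable def hitsDeviation (y : ℕ → ℝ) (u v : ℝ) (N : ℕ) : ℝ :=
  hits (Ioc 0 N) y u v - N * (v - u)

section Deviation

variable (y : ℕ → ℝ) {u v : ℝ}

lemma hitsDeviation_sub {a b : ℕ} (hab : a ≤ b) :
    hitsDeviation y u v b - hitsDeviation y u v a =
      hits (Ioc a b) y u v - ((b : ℝ) - a) * (v - u) := by
  have hsplit := hits_union (Ioc 0 a) y (u := u) (v := v) (t := Ioc a b) (Ioc_disjoint_Ioc_of_le le_rfl)
  rw [Ioc_union_Ioc_eq_Ioc (Nat.zero_le a) hab] at hsplit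
  rw [hitsDeviation, hitsDeviation, hsplit]
  push_cast
  ring

lemma abs_hitsDeviation_sub_le (hu : 0 ≤ u) (huv : u ≤ v) (hv : v ≤ 1) {a b : ℕ}
    (hab : a ≤ b) :
    |hitsDeviation y u v b - hitsDeviation y u v a| ≤ (b : ℝ) - a := by
  have hcard : ((Ioc a b).card : ℝ) = b - a := by rw [Nat.card_Ioc]; push_cast [hab]; ring
  have hba : (0 : ℝ) ≤ b - a := by rw [← hcard]; positivity
  rw [hitsDeviation_sub y hab]
  refine abs_sub_le_of_nonneg_of_le (Nat.cast_nonneg _) ?_ (by nlinarith) (by nlinarith)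
  rw [← hcard]
  exact_mod_cast hits_le_card _ y

lemma abs_hitsDeviation_add_sub_le (hu : 0 ≤ u) (huv : u < v) (hv : v ≤ 1) (n m : ℕ) :
    |hitsDeviation y u v (n + m) - hitsDeviation y u v n| ≤
      m * disc (Icc (n + 1) (n + m)) y := by
  have hcard : (Icc (n + 1) (n + m)).card = m := by rw [Nat.card_Icc]; omega
  have hblock := abs_hits_sub_le_card_mul_disc (Icc (n + 1) (n + m)) y hu huv hv
  rw [hcard] at hblock
  rwa [hitsDeviation_sub y (Nat.le_add_right n m), Nat.cast_add, add_sub_cancel_left,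
    ← Icc_add_one_left_eq_Ioc]

end Deviation

lemma disc_Icc_one_le_of_blocks {x : ℕ → ℝ} {ε : ℝ} {n₀ : ℕ}
    (hblock : ∀ n ≥ n₀, ∃ m : ℕ, 0 < m ∧ (m : ℝ) ≤ n * ε ∧
      disc (Icc (n + 1) (n + m)) x ≤ ε)
    {N : ℕ} (hN : n₀ ≤ N) (hN₀ : 0 < N) :
    disc (Icc 1 N) x ≤ n₀ / N + 2 * ε := by
  refine disc_le _ x fun u v hu huv hv => ?_
  set F := hitsDeviation x u v
  have hF : ∀ a b, a ≤ b → |F b - F a| ≤ (b : ℝ) - a :=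
    fun a b => abs_hitsDeviation_sub_le x hu huv.le hv
  have hFblock : ∀ n ≥ n₀, ∃ m : ℕ, 0 < m ∧ (m : ℝ) ≤ n * ε ∧ |F (n + m) - F n| ≤ m * ε := by
    intro n hn
    obtain ⟨m, hm, hmn, hdisc⟩ := hblock n hn
    exact ⟨m, hm, hmn, (abs_hitsDeviation_add_sub_le x hu huv hv n m).trans (by gcongr)⟩
  have hF₀ : F 0 = 0 := by simp [F, hitsDeviation, hits]
  have hNpos : (0 : ℝ) < N := by exact_mod_cast hN₀
  have hcard : ((Icc 1 N).card : ℝ) = N := by rw [Nat.card_Icc]; simp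
  have hIcc : Icc 1 N = Ioc 0 N := Icc_add_one_left_eq_Ioc 0 N
  have hFN_div : (hits (Ioc 0 N) x u v : ℝ) / N - (v - u) = F N / N := by
    simp only [F, hitsDeviation]
    field_simp
  rw [hcard, hIcc, hFN_div, abs_div, abs_of_pos hNpos, div_le_iff₀ hNpos]
  calc |F N| ≤ n₀ + 2 * ε * N := abs_le_of_blocks hF hF₀ hFblock hN
    _ = (n₀ / N + 2 * ε) * N := by field_simp

open Filter in
theorem limsup_disc_le_general (x : ℕ → ℝ) (ε : ℝ)
    (h : ∃ n0 : ℕ, ∀ n ≥ n0, ∃ m : ℕ, 0 < m ∧ (m : ℝ) ≤ n * ε ∧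
          disc (Finset.Icc (n + 1) (n + m)) x ≤ ε) :
    limsup (fun N => disc (Finset.Icc 1 N) x) atTop ≤ 2 * ε := by
  obtain ⟨n₀, hblock⟩ := h
  have hev : ∀ᶠ N : ℕ in atTop, disc (Icc 1 N) x ≤ n₀ / N + 2 * ε := by
    filter_upwards [eventually_ge_atTop (max n₀ 1)] with N hN
    exact disc_Icc_one_le_of_blocks hblock (le_of_max_le_left hN) (le_of_max_le_right hN)
  have htend : Tendsto (fun N : ℕ => (n₀ : ℝ) / N + 2 * ε) atTop (nhds (2 * ε)) := by
    simpa using (tendsto_const_div_atTop_nhds_zero_nat (n₀ : ℝ)).add_const (2 * ε)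
  calc limsup (fun N => disc (Icc 1 N) x) atTop
      ≤ limsup (fun N : ℕ => (n₀ : ℝ) / N + 2 * ε) atTop :=
        limsup_le_limsup hev (isCoboundedUnder_le_of_le atTop fun N => disc_nonneg _ x)
          htend.isBoundedUnder_le
    _ = 2 * ε := htend.limsup_eq

open Filter in
/-- Lemma 8 (L4): from small discrepancy on short blocks to small discrepancy
of initial segments. -/
theorem limsup_disc_le (x : ℕ → ℝ) (ε : ℝ) (hε : 0 < ε)
    (h : ∃ n0 : ℕ, ∀ n ≥ n0, ∃ m : ℕ, 0 < m ∧ (m : ℝ) ≤ n * ε ∧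
          disc (Finset.Icc (n + 1) (n + m)) x ≤ ε) :
    limsup (fun N => disc (Finset.Icc 1 N) x) atTop ≤ 2 * ε :=
  limsup_disc_le_general x ε h
end

section
/- Let $y_1 = 0$ and for $k \ge 2$ let $y_k = (k-1)\Delta y_1 + \sum_{j=1}^{k-2}(k-j-1)\Delta^2 y_j$, where $\Delta y_1 \ge 0$ and all $\Delta^2 y_j \ge 0$. Define $\mu_0 = \max\{\Delta y_1, \Delta^2 y_1\}$, $\mu_j = \Delta^2 y_j$ for $j \ge 1$, and $z_1 = 0$, $z_k = \sum_{j=0}^{k-2}(k-j-1)\mu_j$ for $k \ge 2$. Then $y_k \le z_k \le 3 y_k$ for all $k \ge 3$. -/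
/-- Comparison between a sequence given by its second-difference expansion and
the modified sequence `z`. -/
theorem y_le_z_le_three_y (d1 : ℝ) (d2 : ℕ → ℝ) (y z μ : ℕ → ℝ)
    (hd1 : 0 ≤ d1) (hd2 : ∀ j : ℕ, 1 ≤ j → 0 ≤ d2 j)
    (hpos : 0 < d1 ∨ 0 < d2 1)
    (hy1 : y 1 = 0)
    (hy : ∀ k : ℕ, 2 ≤ k → y k =
      ((k : ℝ) - 1) * d1 + ∑ j ∈ Finset.Icc 1 (k - 2), ((k : ℝ) - j - 1) * d2 j)
    (hμ0 : μ 0 = max d1 (d2 1)) (hμ : ∀ j : ℕ, 1 ≤ j → μ j = d2 j)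
    (hz1 : z 1 = 0)
    (hz : ∀ k : ℕ, 2 ≤ k → z k = ∑ j ∈ Finset.range (k - 1), ((k : ℝ) - j - 1) * μ j) :
    ∀ k : ℕ, 3 ≤ k → y k ≤ z k ∧ z k ≤ 3 * y k := by
  intro k hk
  obtain ⟨n, hn, rfl⟩ : ∃ n, 1 ≤ n ∧ k = n + 2 := ⟨k - 2, by omega, by omega⟩
  set S : ℝ := ∑ i ∈ Finset.range n, (((n : ℝ) + 2) - (i + 1) - 1) * d2 (i + 1) with hS
  have hterm : ∀ i ∈ Finset.range n, 0 ≤ (((n : ℝ) + 2) - (i + 1) - 1) * d2 (i + 1) := by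
    intro i hi
    have hi' : i < n := Finset.mem_range.mp hi
    have : (i : ℝ) ≤ (n : ℝ) - 1 := by
      have : (i : ℝ) + 1 ≤ (n : ℝ) := by exact_mod_cast hi'
      linarith
    apply mul_nonneg (by linarith) (hd2 _ (by omega))
  have hS0 : 0 ≤ S := Finset.sum_nonneg hterm
  have hSge : ((n : ℝ)) * d2 1 ≤ S := by
    have h0 : 0 ∈ Finset.range n := Finset.mem_range.mpr (by omega)
    have h := Finset.single_le_sum hterm h0
    norm_num at h
    linarith
  have hyk : y (n + 2) = ((n : ℝ) + 1) * d1 + S := by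
    rw [hy _ (by omega)]
    congr 1
    · push_cast; ring
    · rw [show n + 2 - 2 = n from rfl, show Finset.Icc 1 n = Finset.Ico 1 (n + 1) by
        rw [Finset.Ico_add_one_right_eq_Icc], Finset.sum_Ico_eq_sum_range]
      apply Finset.sum_congr (by simp)
      intro i _
      push_cast
      ring_nf
  have hzk : z (n + 2) = ((n : ℝ) + 1) * μ 0 + S := by
    rw [hz _ (by omega), show n + 2 - 1 = n + 1 from rfl, Finset.sum_range_succ']
    rw [add_comm]
    congr 1
    · push_cast; ring
    · apply Finset.sum_congr rfl
      intro i _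
      rw [hμ (i + 1) (by omega)]
      push_cast
      ring_nf
  have hμ0le : μ 0 ≤ d1 + d2 1 := by
    rw [hμ0]
    exact max_le (by linarith [hd2 1 le_rfl]) (by linarith)
  have hμ0ge : d1 ≤ μ 0 := hμ0 ▸ le_max_left _ _
  constructor
  · rw [hyk, hzk]
    have : ((n : ℝ) + 1) * d1 ≤ ((n : ℝ) + 1) * μ 0 := by
      apply mul_le_mul_of_nonneg_left hμ0ge (by positivity)
    linarith
  · rw [hyk, hzk]
    have hn1 : (1 : ℝ) ≤ (n : ℝ) := by exact_mod_cast hn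
    have h1 : ((n : ℝ) + 1) * μ 0 ≤ ((n : ℝ) + 1) * (d1 + d2 1) :=
      mul_le_mul_of_nonneg_left hμ0le (by positivity)
    have h2 : ((n : ℝ) + 1) * d2 1 ≤ 2 * ((n : ℝ) * d2 1) := by
      have := hd2 1 le_rfl
      nlinarith
    nlinarith
end

section
/- Let $(x_n)$ be a real sequence and $n$ a fixed index. Suppose $p, q$ are integers with $q \ge 1$ satisfying $|\Delta x_n - p/q| \le 1/(q q')$ for some $q' > q$, and suppose $\Delta^2 x_i \le \varepsilon'$ for all $i \ge n$, where $q \varepsilon' \le 1/q^3$ and $1/(qq') \le 1/q^2$. Then for all $1 \le j \le q$: $\left|x_{n+j} - x_n - \frac{jp}{q}\right| \le \frac{2}{q}$. -/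
/-!
Since the second differences lie in `[0, ε']`, the slopes `x (i + 1) - x i` drift from the slope at
`n` by at most `k ε' ≤ q ε' ≤ 1 / q ^ 2` over `k ≤ q` steps, so each of the first `q` slopes is
within `2 / q ^ 2` of `p / q`. Summing `j ≤ q` of these errors gives `2 / q`.
-/

theorem dist_le_mul_of_dist_succ_le {α : Type*} [PseudoMetricSpace α] {f : ℕ → α} {m k : ℕ}
    {d : ℝ} (hd : ∀ i, m ≤ i → i < m + k → dist (f i) (f (i + 1)) ≤ d) :
    dist (f m) (f (m + k)) ≤ k * d := by
  simpa using dist_le_Ico_sum_of_dist_le (Nat.le_add_right m k) (hd _)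

theorem abs_sub_slope_le_of_abs_second_diff_le {x : ℕ → ℝ} {n : ℕ} {ε : ℝ}
    (hε : ∀ i, n ≤ i → |x (i + 2) - 2 * x (i + 1) + x i| ≤ ε) (k : ℕ) :
    |(x (n + k + 1) - x (n + k)) - (x (n + 1) - x n)| ≤ k * ε := by
  rw [abs_sub_comm, ← Real.dist_eq]
  refine dist_le_mul_of_dist_succ_le (f := fun i => x (i + 1) - x i) fun i hi _ => ?_
  rw [Real.dist_eq, abs_sub_comm]
  convert hε i hi using 2
  ring

theorem approx_along_sequence_general (x : ℕ → ℝ) (n : ℕ) (p : ℤ) (q : ℕ) (q' ε' : ℝ)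
    (happrox : |(x (n + 1) - x n) - (p : ℝ) / q| ≤ 1 / (q * q'))
    (hΔ2 : ∀ i : ℕ, n ≤ i → 0 ≤ x (i + 2) - 2 * x (i + 1) + x i ∧
      x (i + 2) - 2 * x (i + 1) + x i ≤ ε')
    (hε' : (q : ℝ) * ε' ≤ 1 / (q : ℝ) ^ 3)
    (hqq' : 1 / ((q : ℝ) * q') ≤ 1 / (q : ℝ) ^ 2) :
    ∀ j : ℕ, 1 ≤ j → j ≤ q →
      |x (n + j) - x n - (j : ℝ) * p / q| ≤ 2 / q := by
  intro j hj hjq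
  have hq : (1 : ℝ) ≤ q := by exact_mod_cast hj.trans hjq
  have hε'_nonneg : 0 ≤ ε' := (hΔ2 n le_rfl).1.trans (hΔ2 n le_rfl).2
  have hslope : ∀ k, k ≤ q → |x (n + k + 1) - x (n + k) - p / q| ≤ 2 / (q : ℝ) ^ 2 := by
    intro k hk
    have hdrift := abs_sub_slope_le_of_abs_second_diff_le
      (fun i hi => abs_le.2 ⟨by linarith [(hΔ2 i hi).1], (hΔ2 i hi).2⟩) k
    have hkε : (k : ℝ) * ε' ≤ 1 / (q : ℝ) ^ 2 := calc
      (k : ℝ) * ε' ≤ q * ε' := by gcongr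
      _ ≤ 1 / (q : ℝ) ^ 3 := hε'
      _ ≤ 1 / (q : ℝ) ^ 2 := by gcongr; norm_num
    calc |x (n + k + 1) - x (n + k) - p / q|
        ≤ |(x (n + k + 1) - x (n + k)) - (x (n + 1) - x n)| + |(x (n + 1) - x n) - p / q| :=
          abs_sub_le _ _ _
      _ ≤ 2 / (q : ℝ) ^ 2 := by linarith [show (2 : ℝ) / q ^ 2 = 1 / q ^ 2 + 1 / q ^ 2 by ring]
  have hsum := dist_le_mul_of_dist_succ_le (f := fun i => x i - i * p / q) (m := n) (k := j)
    (d := 2 / (q : ℝ) ^ 2) fun i hi hij => by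
      obtain ⟨k, rfl⟩ := Nat.exists_eq_add_of_le hi
      convert hslope k (by omega) using 1
      rw [Real.dist_eq, abs_sub_comm]
      push_cast
      ring_nf
  rw [Real.dist_eq, abs_sub_comm] at hsum
  calc |x (n + j) - x n - (j : ℝ) * p / q|
      = |x (n + j) - ((n + j : ℕ) : ℝ) * p / q - (x n - n * p / q)| := by push_cast; ring_nf
    _ ≤ j * (2 / (q : ℝ) ^ 2) := hsum
    _ ≤ q * (2 / (q : ℝ) ^ 2) := by gcongr
    _ = 2 / q := by field_simp

/-- Estimate (x25): Diophantine approximation propagated along the sequence. -/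
theorem approx_along_sequence (x : ℕ → ℝ) (n : ℕ) (p : ℤ) (q : ℕ) (q' ε' : ℝ)
    (hq : 1 ≤ q) (hq' : (q : ℝ) < q')
    (happrox : |(x (n + 1) - x n) - (p : ℝ) / q| ≤ 1 / (q * q'))
    (hΔ2 : ∀ i : ℕ, n ≤ i → 0 ≤ x (i + 2) - 2 * x (i + 1) + x i ∧
      x (i + 2) - 2 * x (i + 1) + x i ≤ ε')
    (hε' : (q : ℝ) * ε' ≤ 1 / (q : ℝ) ^ 3)
    (hqq' : 1 / ((q : ℝ) * q') ≤ 1 / (q : ℝ) ^ 2) :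
    ∀ j : ℕ, 1 ≤ j → j ≤ q →
      |x (n + j) - x n - (j : ℝ) * p / q| ≤ 2 / q :=
  approx_along_sequence_general x n p q q' ε' happrox hΔ2 hε' hqq'
end
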